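/- arXiv:2207.04162 — 6 statements merged into one kernel-verified Lean document; each statement's English description precedes it below -/
import Mathlib

section
/- For every real α > 1 there exists a constant Δ_α > 0 such that for all γ ≥ 2, the supremum over x ∈ [0,1] of x^{1/2}·(log(1/x))^α − γ·x² is at most Δ_α · γ^{−1/3} · (log γ)^{4α/3}. -/
open Real Set

/-!
Split `[0, 1]` at `x = γ⁻⁴`. Below it, `log (1/x) ≤ 4α · x^(-1/(4α))` makes the first term at
most `(4α)^α · x^(1/4) ≤ (4α)^α · γ⁻¹`. Above it, `log (1/x) ≤ 4 log γ`, and wherever the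
expression is positive we have `γ · x^(3/2) < log (1/x)^α`, so
`x^(1/2) · log (1/x)^α ≤ γ^(-1/3) · log (1/x)^(4α/3)`.
-/

lemma log_one_div_le_rpow_neg_div {x ε : ℝ} (hx : 0 < x) (hε : 0 < ε) :
    log (1 / x) ≤ x ^ (-ε) / ε := by
  simpa [rpow_neg hx.le, inv_rpow hx.le] using log_le_rpow_div (one_div_pos.2 hx).le hε

lemma rpow_half_mul_log_one_div_rpow_le {α x : ℝ} (hα : 0 < α) (hx : 0 < x) (hx₁ : x ≤ 1) :
    x ^ (1 / 2 : ℝ) * log (1 / x) ^ α ≤ (4 * α) ^ α * x ^ (1 / 4 : ℝ) := by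
  have hlog : log (1 / x) ≤ 4 * α * x ^ (-(1 / (4 * α))) := by
    have h := log_one_div_le_rpow_neg_div hx (by positivity : 0 < 1 / (4 * α))
    rwa [div_div_eq_mul_div, div_one, mul_comm] at h
  have hpow : (4 * α * x ^ (-(1 / (4 * α)))) ^ α = (4 * α) ^ α * x ^ (-(1 / 4 : ℝ)) := by
    rw [mul_rpow (by positivity) (by positivity), ← rpow_mul hx.le]
    congr 2
    field_simp
  calc x ^ (1 / 2 : ℝ) * log (1 / x) ^ α
      ≤ x ^ (1 / 2 : ℝ) * ((4 * α) ^ α * x ^ (-(1 / 4 : ℝ))) := by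
        rw [← hpow]
        gcongr
        exact log_nonneg (one_le_one_div hx hx₁)
    _ = (4 * α) ^ α * x ^ (1 / 4 : ℝ) := by
        rw [mul_left_comm, ← rpow_add hx]
        norm_num

lemma rpow_half_mul_le_of_mul_sq_lt {x γ M : ℝ} (hx : 0 < x) (hγ : 0 < γ) (hM : 0 ≤ M)
    (h : γ * x ^ 2 < x ^ (1 / 2 : ℝ) * M) :
    x ^ (1 / 2 : ℝ) * M ≤ γ ^ (-1 / 3 : ℝ) * M ^ (4 / 3 : ℝ) := by
  have hcube : γ * x ^ (3 / 2 : ℝ) ≤ M := by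
    have hsq : x ^ 2 = x ^ (3 / 2 : ℝ) * x ^ (1 / 2 : ℝ) := by
      rw [← rpow_add hx, ← rpow_two]
      norm_num
    rw [hsq, ← mul_assoc, mul_comm (x ^ (1 / 2 : ℝ))] at h
    exact (lt_of_mul_lt_mul_right h (by positivity)).le
  have hroot : x ^ (1 / 2 : ℝ) ≤ γ ^ (-1 / 3 : ℝ) * M ^ (1 / 3 : ℝ) := by
    calc x ^ (1 / 2 : ℝ) = (x ^ (3 / 2 : ℝ)) ^ (1 / 3 : ℝ) := by
          rw [← rpow_mul hx.le]; norm_num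
      _ ≤ (M / γ) ^ (1 / 3 : ℝ) := by
          gcongr
          rwa [le_div_iff₀ hγ, mul_comm]
      _ = γ ^ (-1 / 3 : ℝ) * M ^ (1 / 3 : ℝ) := by
          rw [div_rpow hM hγ.le, div_eq_mul_inv, ← rpow_neg hγ.le, mul_comm]
          norm_num
  calc x ^ (1 / 2 : ℝ) * M ≤ γ ^ (-1 / 3 : ℝ) * M ^ (1 / 3 : ℝ) * M := by gcongr
    _ = γ ^ (-1 / 3 : ℝ) * M ^ (4 / 3 : ℝ) := by
        rw [mul_assoc, ← rpow_add_one' hM (by norm_num)]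
        norm_num

lemma log_one_div_le_four_mul_log {x γ : ℝ} (hγ : 0 < γ) (hx : γ ^ (-4 : ℝ) < x) :
    log (1 / x) ≤ 4 * log γ := by
  have h := log_lt_log (by positivity) hx
  rw [log_rpow hγ] at h
  rw [one_div, log_inv]
  linarith

lemma rpow_half_mul_log_one_div_rpow_le_of_le {α γ x : ℝ} (hα : 0 < α) (hγ : 2 ≤ γ)
    (hx : 0 < x) (hxγ : x ≤ γ ^ (-4 : ℝ)) :
    x ^ (1 / 2 : ℝ) * log (1 / x) ^ α
      ≤ (4 * α) ^ α / log 2 ^ (4 * α / 3) * γ ^ (-1 / 3 : ℝ) * log γ ^ (4 * α / 3) := by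
  have hγ₁ : 1 ≤ γ := by linarith
  have hlog2 : 0 < log 2 := log_pos one_lt_two
  have hx₁ : x ≤ 1 := hxγ.trans (rpow_le_one_of_one_le_of_nonpos hγ₁ (by norm_num))
  have hroot : x ^ (1 / 4 : ℝ) ≤ γ ^ (-1 / 3 : ℝ) :=
    calc x ^ (1 / 4 : ℝ) ≤ (γ ^ (-4 : ℝ)) ^ (1 / 4 : ℝ) := by gcongr
      _ = γ ^ (-1 : ℝ) := by rw [← rpow_mul (by positivity)]; norm_num
      _ ≤ γ ^ (-1 / 3 : ℝ) := rpow_le_rpow_of_exponent_le hγ₁ (by norm_num)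
  have hratio : 1 ≤ log γ ^ (4 * α / 3) / log 2 ^ (4 * α / 3) :=
    (one_le_div (by positivity)).2 (by gcongr)
  calc x ^ (1 / 2 : ℝ) * log (1 / x) ^ α ≤ (4 * α) ^ α * x ^ (1 / 4 : ℝ) :=
        rpow_half_mul_log_one_div_rpow_le hα hx hx₁
    _ ≤ (4 * α) ^ α * γ ^ (-1 / 3 : ℝ) * 1 := by rw [mul_one]; gcongr
    _ ≤ (4 * α) ^ α * γ ^ (-1 / 3 : ℝ) * (log γ ^ (4 * α / 3) / log 2 ^ (4 * α / 3)) := by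
        gcongr
    _ = (4 * α) ^ α / log 2 ^ (4 * α / 3) * γ ^ (-1 / 3 : ℝ) * log γ ^ (4 * α / 3) := by ring

lemma rpow_half_mul_log_one_div_rpow_le_of_lt {α γ x : ℝ} (hα : 0 < α) (hγ : 1 < γ)
    (hxγ : γ ^ (-4 : ℝ) < x) (hx₁ : x ≤ 1)
    (h : γ * x ^ 2 < x ^ (1 / 2 : ℝ) * log (1 / x) ^ α) :
    x ^ (1 / 2 : ℝ) * log (1 / x) ^ α ≤ 4 ^ (4 * α / 3) * γ ^ (-1 / 3 : ℝ) * log γ ^ (4 * α / 3) := by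
  have hγ₀ : 0 < γ := by linarith
  have hx : 0 < x := (rpow_pos_of_pos hγ₀ _).trans hxγ
  have hL : 0 ≤ log (1 / x) := log_nonneg (one_le_one_div hx hx₁)
  calc x ^ (1 / 2 : ℝ) * log (1 / x) ^ α
      ≤ γ ^ (-1 / 3 : ℝ) * (log (1 / x) ^ α) ^ (4 / 3 : ℝ) :=
        rpow_half_mul_le_of_mul_sq_lt hx hγ₀ (by positivity) h
    _ = γ ^ (-1 / 3 : ℝ) * log (1 / x) ^ (4 * α / 3) := by
        rw [← rpow_mul hL]; ring_nf
    _ ≤ γ ^ (-1 / 3 : ℝ) * (4 * log γ) ^ (4 * α / 3) := by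
        gcongr
        exact log_one_div_le_four_mul_log hγ₀ hxγ
    _ = 4 ^ (4 * α / 3) * γ ^ (-1 / 3 : ℝ) * log γ ^ (4 * α / 3) := by
        rw [mul_rpow (by norm_num) (log_pos hγ).le]; ring

lemma rpow_half_mul_log_one_div_rpow_sub_le {α γ x : ℝ} (hα : 0 < α) (hγ : 2 ≤ γ)
    (hx : x ∈ Icc (0 : ℝ) 1) :
    x ^ (1 / 2 : ℝ) * log (1 / x) ^ α - γ * x ^ 2
      ≤ ((4 * α) ^ α / log 2 ^ (4 * α / 3) + 4 ^ (4 * α / 3)) * γ ^ (-1 / 3 : ℝ)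
          * log γ ^ (4 * α / 3) := by
  have hlog2 : 0 < log 2 := log_pos one_lt_two
  have hlogγ : 0 < log γ := log_pos (by linarith)
  rcases le_or_gt (x ^ (1 / 2 : ℝ) * log (1 / x) ^ α - γ * x ^ 2) 0 with hneg | hpos
  · exact hneg.trans (by positivity)
  have hx₀ : 0 < x := by
    rcases hx.1.eq_or_lt with rfl | h
    · simp [zero_rpow] at hpos
    · exact h
  have hdrop : x ^ (1 / 2 : ℝ) * log (1 / x) ^ α - γ * x ^ 2 ≤ x ^ (1 / 2 : ℝ) * log (1 / x) ^ α :=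
    sub_le_self _ (by positivity)
  refine hdrop.trans ?_
  rcases le_or_gt x (γ ^ (-4 : ℝ)) with hsmall | hlarge
  · refine (rpow_half_mul_log_one_div_rpow_le_of_le hα hγ hx₀ hsmall).trans ?_
    gcongr
    exact le_add_of_nonneg_right (by positivity)
  · refine (rpow_half_mul_log_one_div_rpow_le_of_lt hα (by linarith) hlarge hx.2
      (sub_pos.1 hpos)).trans ?_
    gcongr
    exact le_add_of_nonneg_left (by positivity)

theorem stmt_0 (α : ℝ) (hα : 1 < α) :
    ∃ Δ : ℝ, 0 < Δ ∧ ∀ γ : ℝ, 2 ≤ γ →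
      sSup ((fun x : ℝ => x ^ ((1:ℝ)/2) * (Real.log (1/x)) ^ α - γ * x ^ 2) '' Set.Icc 0 1)
        ≤ Δ * γ ^ (-(1:ℝ)/3) * (Real.log γ) ^ (4*α/3) := by
  have hα₀ : 0 < α := by linarith
  refine ⟨(4 * α) ^ α / log 2 ^ (4 * α / 3) + 4 ^ (4 * α / 3), by positivity, fun γ hγ => ?_⟩
  have hlogγ : 0 < log γ := log_pos (by linarith)
  refine Real.sSup_le ?_ (by positivity)
  rintro _ ⟨x, hx, rfl⟩
  exact rpow_half_mul_log_one_div_rpow_sub_le hα₀ hγ hx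
end

section
/- Let (h_t)_{t∈[a,b]} be a real-valued function of t and for n ≥ 0 set t_{n,i} = a + (b−a)·i·2^{−n} for i = 0,…,2^n, X_n = max over i of |h_{t_{n,i}} − h_{t_{n,i−1}}|, and for t ∈ [a,b] let v_n = a + (b−a)·2^{−n}·⌊(t−a)·2^n/(b−a)⌋. If h is continuous on [a,b], then for every t ∈ [a,b], |h_t − h_a| ≤ Σ_{n=1}^∞ X_n. -/
/-!
Let `v n` be the left end of the level-`n` dyadic cell of `[a, b]` containing `t`. Consecutive
points `v n`, `v (n + 1)` either coincide or are neighbours in the level-`(n + 1)` grid, so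
`|h (v (n + 1)) - h (v n)| ≤ X (n + 1)`. Since `v 0 = a` and `v n → t`, continuity of `h` turns
the telescoping sum into the bound.
-/

open Filter Topology Finset

noncomputable section

/-- Without the cap `2 ^ n - 1`, `x = 1` would get index `2 ^ n` at every level, and the index
sequence would not start at `0`. -/
def dyadicIndex (x : ℝ) (n : ℕ) : ℕ := min ⌊x * 2 ^ n⌋₊ (2 ^ n - 1)

def dyadicPoint (a b : ℝ) (n : ℕ) (s : ℝ) : ℝ := a + (b - a) * s / 2 ^ n

def dyadicOscillation (h : ℝ → ℝ) (a b : ℝ) (n : ℕ) : ℝ :=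
  (range (2 ^ n)).sup' (nonempty_range_iff.mpr (by positivity))
    (fun i => |h (dyadicPoint a b n (i + 1)) - h (dyadicPoint a b n i)|)

end

theorem Nat.floor_two_mul_eq_or {y : ℝ} (hy : 0 ≤ y) :
    ⌊2 * y⌋₊ = 2 * ⌊y⌋₊ ∨ ⌊2 * y⌋₊ = 2 * ⌊y⌋₊ + 1 := by
  have hlow : 2 * ⌊y⌋₊ ≤ ⌊2 * y⌋₊ :=
    Nat.le_floor (by push_cast; linarith [Nat.floor_le hy])
  have hupp : ⌊2 * y⌋₊ < 2 * ⌊y⌋₊ + 2 :=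
    (Nat.floor_lt (by positivity)).mpr (by push_cast; linarith [Nat.lt_floor_add_one y])
  omega

section DyadicIndex

variable {x : ℝ}

@[simp]
theorem dyadicIndex_zero (x : ℝ) : dyadicIndex x 0 = 0 := by
  simp [dyadicIndex]

theorem dyadicIndex_lt (x : ℝ) (n : ℕ) : dyadicIndex x n < 2 ^ n := by
  have := Nat.one_le_two_pow (n := n)
  unfold dyadicIndex
  omega

theorem dyadicIndex_succ_eq_or (hx : 0 ≤ x) (n : ℕ) :
    dyadicIndex x (n + 1) = 2 * dyadicIndex x n ∨
      dyadicIndex x (n + 1) = 2 * dyadicIndex x n + 1 := by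
  have hfloor := Nat.floor_two_mul_eq_or (y := x * 2 ^ n) (by positivity)
  have hpow : (2 : ℕ) ^ (n + 1) = 2 * 2 ^ n := by ring
  have := Nat.one_le_two_pow (n := n)
  unfold dyadicIndex
  rw [show x * 2 ^ (n + 1) = 2 * (x * 2 ^ n) by ring, hpow]
  omega

theorem abs_dyadicIndex_sub_le (hx : x ∈ Set.Icc (0 : ℝ) 1) (n : ℕ) :
    |(dyadicIndex x n : ℝ) - x * 2 ^ n| ≤ 1 := by
  have hpos : (0 : ℝ) ≤ x * 2 ^ n := mul_nonneg hx.1 (by positivity)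
  rcases le_total ⌊x * 2 ^ n⌋₊ (2 ^ n - 1) with hle | hle
  · rw [dyadicIndex, min_eq_left hle, abs_le]
    constructor <;> linarith [Nat.floor_le hpos, Nat.lt_floor_add_one (x * 2 ^ n)]
  · have hcast : ((2 ^ n - 1 : ℕ) : ℝ) = 2 ^ n - 1 := by
      rw [Nat.cast_sub Nat.one_le_two_pow]; push_cast; ring
    have hx2 : x * 2 ^ n ≤ 2 ^ n := by nlinarith [hx.2, pow_pos (two_pos : (0 : ℝ) < 2) n]
    have hfl := Nat.floor_le hpos
    have hfl' : ((2 ^ n - 1 : ℕ) : ℝ) ≤ ⌊x * 2 ^ n⌋₊ := by exact_mod_cast hle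
    rw [dyadicIndex, min_eq_right hle, hcast, abs_le]
    constructor <;> linarith

theorem tendsto_dyadicIndex_div (hx : x ∈ Set.Icc (0 : ℝ) 1) :
    Tendsto (fun n => (dyadicIndex x n : ℝ) / 2 ^ n) atTop (𝓝 x) := by
  have hbound (n : ℕ) : |(dyadicIndex x n : ℝ) / 2 ^ n - x| ≤ (1 / 2) ^ n := by
    have hpow : (0 : ℝ) < 2 ^ n := by positivity
    rw [show (dyadicIndex x n : ℝ) / 2 ^ n - x = ((dyadicIndex x n : ℝ) - x * 2 ^ n) / 2 ^ n by
      field_simp, abs_div, abs_of_pos hpow, div_pow, one_pow]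
    gcongr
    exact abs_dyadicIndex_sub_le hx n
  rw [tendsto_iff_norm_sub_tendsto_zero]
  exact squeeze_zero (fun _ => norm_nonneg _) hbound
    (tendsto_pow_atTop_nhds_zero_of_lt_one (by norm_num) (by norm_num))

end DyadicIndex

section DyadicPoint

variable {a b : ℝ} {n : ℕ}

theorem dyadicPoint_two_mul (a b : ℝ) (n : ℕ) (s : ℝ) :
    dyadicPoint a b (n + 1) (2 * s) = dyadicPoint a b n s := by
  simp only [dyadicPoint, pow_succ]
  field_simp

theorem dyadicPoint_eq (a b : ℝ) (n : ℕ) (s : ℝ) :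
    dyadicPoint a b n s = a + (b - a) * (s / 2 ^ n) := by
  rw [dyadicPoint, mul_div_assoc]

theorem dyadicPoint_mem_Icc (hab : a ≤ b) {i : ℕ} (hi : i ≤ 2 ^ n) :
    dyadicPoint a b n i ∈ Set.Icc a b := by
  have hpow : (0 : ℝ) < 2 ^ n := by positivity
  have hi' : (i : ℝ) / 2 ^ n ≤ 1 := by
    rw [div_le_one hpow]; exact_mod_cast hi
  have hi0 : 0 ≤ (i : ℝ) / 2 ^ n := by positivity
  rw [dyadicPoint_eq]
  constructor <;> nlinarith

theorem tendsto_dyadicPoint_dyadicIndex {x : ℝ} (hx : x ∈ Set.Icc (0 : ℝ) 1) :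
    Tendsto (fun n => dyadicPoint a b n (dyadicIndex x n)) atTop (𝓝 (a + (b - a) * x)) := by
  simp only [dyadicPoint_eq]
  exact tendsto_const_nhds.add (tendsto_const_nhds.mul (tendsto_dyadicIndex_div hx))

end DyadicPoint

section DyadicOscillation

variable {h : ℝ → ℝ} {a b : ℝ} {n : ℕ}

theorem abs_sub_le_dyadicOscillation {i : ℕ} (hi : i < 2 ^ n) :
    |h (dyadicPoint a b n (i + 1)) - h (dyadicPoint a b n i)| ≤ dyadicOscillation h a b n :=
  le_sup' (fun i : ℕ => |h (dyadicPoint a b n (i + 1)) - h (dyadicPoint a b n i)|)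
    (mem_range.mpr hi)

theorem dyadicOscillation_nonneg (h : ℝ → ℝ) (a b : ℝ) (n : ℕ) :
    0 ≤ dyadicOscillation h a b n :=
  (abs_nonneg _).trans (abs_sub_le_dyadicOscillation (i := 0) (by positivity))

theorem abs_sub_dyadicPoint_dyadicIndex_succ_le {x : ℝ} (hx : 0 ≤ x) (n : ℕ) :
    |h (dyadicPoint a b (n + 1) (dyadicIndex x (n + 1)))
        - h (dyadicPoint a b n (dyadicIndex x n))| ≤ dyadicOscillation h a b (n + 1) := by
  have hleft : dyadicPoint a b n (dyadicIndex x n)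
      = dyadicPoint a b (n + 1) ((2 * dyadicIndex x n : ℕ) : ℝ) := by
    push_cast; rw [dyadicPoint_two_mul]
  rw [hleft]
  rcases dyadicIndex_succ_eq_or hx n with hstep | hstep
  · rw [hstep, sub_self, abs_zero]
    exact dyadicOscillation_nonneg h a b (n + 1)
  · rw [hstep, Nat.cast_succ]
    exact abs_sub_le_dyadicOscillation (by have := dyadicIndex_lt x (n + 1); omega)

end DyadicOscillation

theorem stmt_6 (a b : ℝ) (hab : a < b) (h : ℝ → ℝ)
    (hc : ContinuousOn h (Set.Icc a b))
    (X : ℕ → ℝ)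
    (hX : ∀ n : ℕ, X n = (Finset.range (2^n)).sup'
      (Finset.nonempty_range_iff.mpr (by positivity))
      (fun i => |h (a + (b-a)*((i:ℝ)+1)/2^n) - h (a + (b-a)*(i:ℝ)/2^n)|)) :
    ∀ t ∈ Set.Icc a b,
      ENNReal.ofReal |h t - h a| ≤ ∑' n : ℕ, ENNReal.ofReal (X (n+1)) := by
  have hX' (n : ℕ) : X n = dyadicOscillation h a b n := hX n
  intro t ht
  have hba : 0 < b - a := sub_pos.mpr hab
  set x := (t - a) / (b - a)
  have hx : x ∈ Set.Icc (0 : ℝ) 1 :=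
    ⟨div_nonneg (by linarith [ht.1]) hba.le, (div_le_one hba).mpr (by linarith [ht.2])⟩
  set v : ℕ → ℝ := fun n => dyadicPoint a b n (dyadicIndex x n)
  have hv : Tendsto v atTop (𝓝 t) := by
    convert tendsto_dyadicPoint_dyadicIndex (a := a) (b := b) hx using 2
    simp only [x]; field_simp; ring
  have hv_mem (n : ℕ) : v n ∈ Set.Icc a b := dyadicPoint_mem_Icc hab.le (dyadicIndex_lt x n).le
  have hstep (n : ℕ) :
      edist (h (v n)) (h (v (n + 1))) ≤ ENNReal.ofReal (X (n + 1)) := by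
    rw [edist_dist, Real.dist_eq, abs_sub_comm, hX']
    exact ENNReal.ofReal_le_ofReal (abs_sub_dyadicPoint_dyadicIndex_succ_le hx.1 n)
  have hlim : Tendsto (fun n => h (v n)) atTop (𝓝 (h t)) :=
    (hc t ht).tendsto.comp (tendsto_nhdsWithin_iff.mpr ⟨hv, .of_forall hv_mem⟩)
  have hv0 : v 0 = a := by simp [v, dyadicPoint]
  simpa [hv0, edist_dist, Real.dist_eq, abs_sub_comm] using
    edist_le_tsum_of_edist_le_of_tendsto₀ _ hstep hlim
end

section
/- Let f : [−1,1] → ℝ be continuous, and for n ≥ 0 let Λ_n = {2^{−n}·i : i ∈ ℤ, −2^n ≤ i ≤ 2^n − 1}, X_n = sup over x ∈ Λ_n of |f(x + 2^{−n}) − f(x)|, and ‖X‖ = sup over n ≥ 0 of X_n·2^{n/2}/(n+2)². Then there is an absolute constant θ > 0 (independent of f) such that for all x, z ∈ [−1,1] with x ≠ z, |f(x) − f(z)| ≤ θ·‖X‖·|x−z|^{1/2}·(log(4/|x−z|))². -/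
lemma tele_int (g : ℤ → ℝ) (B : ℝ) (a : ℤ) : ∀ k : ℕ,
    (∀ i : ℤ, a ≤ i → i < a + k → |g (i+1) - g i| ≤ B) →
    |g (a + k) - g a| ≤ k * B := by
  intro k
  induction k with
  | zero => intro _; simp
  | succ k ih =>
    intro h
    have h1 : |g (a + k + 1) - g (a + k)| ≤ B := h (a + k) (by omega) (by push_cast; omega)
    have h2 : |g (a + k) - g a| ≤ k * B := by
      apply ih; intro i h3 h4; exact h i h3 (by push_cast at h4 ⊢; omega)
    calc |g (a + (k+1:ℕ)) - g a| = |(g (a+k+1) - g (a+k)) + (g (a+k) - g a)| := by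
          push_cast; ring_nf
      _ ≤ |g (a+k+1) - g (a+k)| + |g (a+k) - g a| := abs_add_le _ _
      _ ≤ B + k * B := add_le_add h1 h2
      _ = (k+1:ℕ) * B := by push_cast; ring

lemma tele_nat (g : ℕ → ℝ) (b : ℕ → ℝ) : ∀ N : ℕ,
    (∀ n, n < N → |g (n+1) - g n| ≤ b n) →
    |g N - g 0| ≤ ∑ n ∈ Finset.range N, b n := by
  intro N
  induction N with
  | zero => intro _; simp
  | succ N ih =>
    intro h
    calc |g (N+1) - g 0| = |(g (N+1) - g N) + (g N - g 0)| := by ring_nf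
      _ ≤ |g (N+1) - g N| + |g N - g 0| := abs_add_le _ _
      _ ≤ b N + ∑ n ∈ Finset.range N, b n :=
          add_le_add (h N (by omega)) (ih fun n hn => h n (by omega))
      _ = ∑ n ∈ Finset.range (N+1), b n := by rw [Finset.sum_range_succ]; ring

lemma dy_lb (c : ℝ) (hc : c ∈ Set.Icc (-1:ℝ) 1) (n : ℕ) : (-(2^n:ℤ)) ≤ ⌊(2:ℝ)^n * c⌋ := by
  rw [Int.le_floor]; push_cast
  nlinarith [hc.1, pow_pos (show (0:ℝ) < 2 by norm_num) n]

lemma dy_ub (c : ℝ) (hc : c ∈ Set.Icc (-1:ℝ) 1) (n : ℕ) : ⌊(2:ℝ)^n * c⌋ ≤ 2^n := by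
  have h : (2:ℝ)^n = (((2:ℤ)^n : ℤ) : ℝ) := by push_cast; ring
  calc ⌊(2:ℝ)^n * c⌋ ≤ ⌊(((2:ℤ)^n : ℤ) : ℝ)⌋ := by
        apply Int.floor_le_floor; rw [← h]
        nlinarith [hc.2, pow_pos (show (0:ℝ) < 2 by norm_num) n]
    _ = 2^n := Int.floor_intCast _

lemma rpow_half (n : ℕ) : ((2:ℝ)^(-(1:ℝ)/2))^n = (2:ℝ)^(-(n:ℝ)/2) := by
  rw [← Real.rpow_natCast ((2:ℝ)^(-(1:ℝ)/2)) n, ← Real.rpow_mul (by norm_num)]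
  ring_nf

lemma summ : Summable (fun n : ℕ => ((n:ℝ)+1)^2 * ((2:ℝ)^(-(1:ℝ)/2))^n) := by
  set r : ℝ := (2:ℝ)^(-(1:ℝ)/2) with hr
  have hr1 : ‖r‖ < 1 := by
    rw [Real.norm_eq_abs, abs_of_pos (Real.rpow_pos_of_pos two_pos _)]
    exact Real.rpow_lt_one_of_one_lt_of_neg one_lt_two (by norm_num)
  have h2 := summable_pow_mul_geometric_of_norm_lt_one 2 hr1
  have h1 := summable_pow_mul_geometric_of_norm_lt_one 1 hr1
  have h0 := summable_pow_mul_geometric_of_norm_lt_one 0 hr1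
  have := (h2.add ((h1.mul_left 2).add h0))
  apply this.congr
  intro n; push_cast; ring

set_option maxHeartbeats 2000000 in
theorem stmt_7 :
    ∃ θ : ℝ, 0 < θ ∧ ∀ f : ℝ → ℝ, ContinuousOn f (Set.Icc (-1) 1) →
      ∀ X : ℕ → ℝ,
      (∀ n : ℕ, X n = (Finset.Icc (-(2^n : ℤ)) (2^n - 1)).sup'
          (Finset.nonempty_Icc.mpr (by nlinarith [pow_pos (show (0:ℤ) < 2 by norm_num) n]))
          (fun i => |f ((i:ℝ)/2^n + 1/2^n) - f ((i:ℝ)/2^n)|)) →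
      ∀ x ∈ Set.Icc (-1:ℝ) 1, ∀ z ∈ Set.Icc (-1:ℝ) 1, x ≠ z →
        ENNReal.ofReal |f x - f z| ≤
          ENNReal.ofReal (θ * |x-z| ^ ((1:ℝ)/2) * (Real.log (4/|x-z|))^2) *
            ⨆ n : ℕ, ENNReal.ofReal (X n * (2:ℝ)^((n:ℝ)/2) / ((n:ℝ)+2)^2) := by
  classical
  set r : ℝ := (2:ℝ)^(-(1:ℝ)/2) with hrdef
  have hr0 : 0 < r := Real.rpow_pos_of_pos two_pos _
  have hr1 : r < 1 := Real.rpow_lt_one_of_one_lt_of_neg one_lt_two (by norm_num)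
  have hsumm : Summable (fun n : ℕ => ((n:ℝ)+1)^2 * r^n) := summ
  set C : ℝ := ∑' n : ℕ, ((n:ℝ)+1)^2 * r^n with hCdef
  have hC0 : 0 ≤ C := tsum_nonneg fun n => by positivity
  have hlog2 : 0 < Real.log 2 := Real.log_pos one_lt_two
  refine ⟨(3 + 2*C) * (4 / Real.log 2)^2, by positivity, ?_⟩
  intro f hf X hXdef x hx z hz hxz
  set θ : ℝ := (3 + 2*C) * (4 / Real.log 2)^2 with hθdef
  have hθ0 : 0 < θ := by positivity
  have hsup : ∀ n : ℕ, ∀ i : ℤ, -(2^n:ℤ) ≤ i → i ≤ 2^n - 1 →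
      |f ((i:ℝ)/2^n + 1/2^n) - f ((i:ℝ)/2^n)| ≤ X n := by
    intro n i h1 h2
    rw [hXdef n]
    exact Finset.le_sup' (fun i : ℤ => |f ((i:ℝ)/2^n + 1/2^n) - f ((i:ℝ)/2^n)|)
      (Finset.mem_Icc.mpr ⟨h1, h2⟩)
  have hX0 : ∀ n, 0 ≤ X n := by
    intro n
    have := hsup n 0 (neg_nonpos.mpr (by positivity))
      (by nlinarith [pow_pos (show (0:ℤ) < 2 by norm_num) n])
    calc (0:ℝ) ≤ _ := abs_nonneg _
      _ ≤ X n := this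
  have hxz2 : |x - z| ≤ 2 := by
    rw [abs_sub_le_iff]; constructor <;> nlinarith [hx.1, hx.2, hz.1, hz.2]
  have hxz0 : 0 < |x - z| := abs_pos.mpr (sub_ne_zero.mpr hxz)
  have hlogxz : 0 < Real.log (4 / |x-z|) := Real.log_pos (by rw [lt_div_iff₀ hxz0]; linarith)
  have hcoef : 0 < θ * |x-z| ^ ((1:ℝ)/2) * (Real.log (4/|x-z|))^2 := by positivity
  by_cases hT : (⨆ n : ℕ, ENNReal.ofReal (X n * (2:ℝ)^((n:ℝ)/2) / ((n:ℝ)+2)^2)) = ⊤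
  · rw [hT, ENNReal.mul_top (by simp [ENNReal.ofReal_eq_zero]; linarith)]
    exact le_top
  · set T := ⨆ n : ℕ, ENNReal.ofReal (X n * (2:ℝ)^((n:ℝ)/2) / ((n:ℝ)+2)^2) with hTdef
    set S : ℝ := T.toReal with hSdef
    have hS0 : 0 ≤ S := ENNReal.toReal_nonneg
    have hXn : ∀ n : ℕ, X n ≤ S * ((n:ℝ)+2)^2 * r^n := by
      intro n
      have h2p : (0:ℝ) < (2:ℝ)^((n:ℝ)/2) := Real.rpow_pos_of_pos two_pos _
      have hn2 : (0:ℝ) < ((n:ℝ)+2)^2 := by positivity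
      have hpos : 0 ≤ X n * (2:ℝ)^((n:ℝ)/2) / ((n:ℝ)+2)^2 :=
        div_nonneg (mul_nonneg (hX0 n) h2p.le) hn2.le
      have hle : ENNReal.ofReal (X n * (2:ℝ)^((n:ℝ)/2) / ((n:ℝ)+2)^2) ≤ T :=
        le_iSup (fun n : ℕ => ENNReal.ofReal (X n * (2:ℝ)^((n:ℝ)/2) / ((n:ℝ)+2)^2)) n
      have hle2 := ENNReal.toReal_mono hT hle
      rw [ENNReal.toReal_ofReal hpos] at hle2
      have hrn : r^n * (2:ℝ)^((n:ℝ)/2) = 1 := by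
        rw [hrdef, rpow_half, ← Real.rpow_add two_pos,
          show -(n:ℝ)/2 + (n:ℝ)/2 = 0 by ring, Real.rpow_zero]
      calc X n = X n * (r^n * (2:ℝ)^((n:ℝ)/2)) := by rw [hrn]; ring
        _ = (X n * (2:ℝ)^((n:ℝ)/2) / ((n:ℝ)+2)^2) * ((n:ℝ)+2)^2 * r^n := by
            field_simp
        _ ≤ S * ((n:ℝ)+2)^2 * r^n :=
            mul_le_mul_of_nonneg_right (mul_le_mul_of_nonneg_right hle2 hn2.le)
              (pow_nonneg hr0.le n)
    have hTS : T = ENNReal.ofReal S := (ENNReal.ofReal_toReal hT).symm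
    rw [hTS, ← ENNReal.ofReal_mul (le_of_lt hcoef)]
    apply ENNReal.ofReal_le_ofReal
    have key : ∀ a b : ℝ, a ∈ Set.Icc (-1:ℝ) 1 → b ∈ Set.Icc (-1:ℝ) 1 → b < a →
        |f a - f b| ≤ θ * (a-b) ^ ((1:ℝ)/2) * (Real.log (4/(a-b)))^2 * S := by
      intro a b ha hb hba
      set δ : ℝ := a - b with hδdef
      have hδ0 : 0 < δ := by rw [hδdef]; linarith
      have hδ2 : δ ≤ 2 := by rw [hδdef]; nlinarith [ha.2, hb.1]
      set m : ℕ := ⌊Real.logb 2 (2/δ)⌋₊ with hmdef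
      have h2δ : (1:ℝ) ≤ 2/δ := (le_div_iff₀ hδ0).mpr (by linarith)
      have hlb0 : 0 ≤ Real.logb 2 (2/δ) := Real.logb_nonneg one_lt_two h2δ
      have h2m_le : (2:ℝ)^(m:ℕ) ≤ 2/δ := by
        calc (2:ℝ)^(m:ℕ) = (2:ℝ)^((m:ℕ):ℝ) := (Real.rpow_natCast 2 m).symm
          _ ≤ (2:ℝ)^(Real.logb 2 (2/δ)) :=
              Real.rpow_le_rpow_of_exponent_le one_le_two (Nat.floor_le hlb0)
          _ = 2/δ := Real.rpow_logb two_pos (by norm_num) (by positivity)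
      have hδm : (2:ℝ)^(m:ℕ) * δ ≤ 2 := by
        rw [← le_div_iff₀ hδ0]; exact h2m_le
      have h2m_gt : (2:ℝ)^(-(m:ℝ)) < δ := by
        have h1 : (2:ℝ)/δ < (2:ℝ)^((m:ℝ)+1) := by
          conv_lhs => rw [← Real.rpow_logb two_pos (by norm_num)
            (show (0:ℝ) < 2/δ by positivity)]
          exact Real.rpow_lt_rpow_of_exponent_lt one_lt_two (Nat.lt_floor_add_one _)
        have h2 : (2:ℝ)^((m:ℝ)+1) = 2 * (2:ℝ)^(m:ℝ) := by
          rw [Real.rpow_add two_pos]; ring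
        have h3 : (2:ℝ)^(-(m:ℝ)) = ((2:ℝ)^((m:ℝ)))⁻¹ := Real.rpow_neg (by norm_num) _
        have h4 : (0:ℝ) < (2:ℝ)^((m:ℝ)) := Real.rpow_pos_of_pos two_pos _
        have h5 : ((2:ℝ)^((m:ℝ)))⁻¹ * (2:ℝ)^((m:ℝ)) = 1 := inv_mul_cancel₀ h4.ne'
        rw [h3]
        rw [h2, div_lt_iff₀ hδ0] at h1
        nlinarith [h5, h4, hδ0]
      have hrm : r^m ≤ δ^((1:ℝ)/2) := by
        rw [hrdef, rpow_half]
        have he : (2:ℝ)^(-(m:ℝ)/2) = ((2:ℝ)^(-(m:ℝ)))^((1:ℝ)/2) := by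
          rw [← Real.rpow_mul (by norm_num)]; ring_nf
        rw [he]
        exact Real.rpow_le_rpow (Real.rpow_nonneg (by norm_num) _) h2m_gt.le (by norm_num)
      have hm3 : (m:ℝ) + 3 ≤ 4 / Real.log 2 * Real.log (4/δ) := by
        have h1 : (m:ℝ) ≤ Real.logb 2 (2/δ) := Nat.floor_le hlb0
        have h1' : (m:ℝ) * Real.log 2 ≤ Real.log (2/δ) := by
          rw [Real.logb, le_div_iff₀ hlog2] at h1
          exact h1
        have h3 : Real.log (2/δ) ≤ Real.log (4/δ) := by
          apply Real.log_le_log (by positivity)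
          rw [div_le_div_iff₀ hδ0 hδ0]; nlinarith
        have h4 : Real.log 2 ≤ Real.log (4/δ) := by
          apply Real.log_le_log two_pos
          rw [le_div_iff₀ hδ0]; linarith
        rw [div_mul_eq_mul_div, le_div_iff₀ hlog2]
        linarith
      -- one dyadic refinement step
      have hstep : ∀ c ∈ Set.Icc (-1:ℝ) 1, ∀ n : ℕ,
          |f ((⌊(2:ℝ)^(n+1)*c⌋:ℝ)/2^(n+1)) - f ((⌊(2:ℝ)^n*c⌋:ℝ)/2^n)| ≤ X (n+1) := by
        intro c hc n
        set A : ℤ := ⌊(2:ℝ)^n * c⌋ with hA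
        set B : ℤ := ⌊(2:ℝ)^(n+1) * c⌋ with hB
        have h2n : (0:ℝ) < 2^n := by positivity
        have hAB1 : 2*A ≤ B := by
          rw [hB, Int.le_floor]
          push_cast
          nlinarith [Int.floor_le ((2:ℝ)^n * c), show (2:ℝ)^(n+1)*c = 2 * (2^n*c) from by ring]
        have hAB2 : B ≤ 2*A + 1 := by
          have h' : B < 2*A + 2 := by
            rw [hB, Int.floor_lt]
            push_cast
            nlinarith [Int.lt_floor_add_one ((2:ℝ)^n * c), show (2:ℝ)^(n+1)*c = 2 * (2^n*c) from by ring]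
          omega
        rcases (by omega : B = 2*A ∨ B = 2*A+1) with h | h
        · have e : ((B:ℝ))/2^(n+1) = (A:ℝ)/2^n := by
            rw [h]; push_cast; field_simp; ring
          rw [e, sub_self, abs_zero]; exact hX0 (n+1)
        · have hiL : -(2^(n+1):ℤ) ≤ 2*A := by
            have h1 := dy_lb c hc n
            have h2 : (2:ℤ)^(n+1) = 2*2^n := by ring
            omega
          have hiR : 2*A ≤ 2^(n+1) - 1 := by
            have h1 := dy_ub c hc (n+1)
            omega
          have hs := hsup (n+1) (2*A) hiL hiR
          have e1 : ((B:ℝ))/2^(n+1) = ((2*A:ℤ):ℝ)/2^(n+1) + 1/2^(n+1) := by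
            rw [h]; push_cast; ring
          have e2 : ((A:ℝ))/2^n = ((2*A:ℤ):ℝ)/2^(n+1) := by
            push_cast; field_simp; ring
          rw [e1, e2]
          exact hs
      -- vertical chaining to the limit
      have hvert : ∀ c ∈ Set.Icc (-1:ℝ) 1,
          |f c - f ((⌊(2:ℝ)^m*c⌋:ℝ)/2^m)| ≤ S * C * ((m:ℝ)+3)^2 * r^m := by
        intro c hc
        set u : ℕ → ℝ := fun N => (⌊(2:ℝ)^(m+N)*c⌋:ℝ)/2^(m+N) with hu
        have humem : ∀ N, u N ∈ Set.Icc (-1:ℝ) 1 := by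
          intro N
          have h1 := dy_lb c hc (m+N)
          have h2 : (⌊(2:ℝ)^(m+N)*c⌋:ℝ) ≤ (2:ℝ)^(m+N)*c := Int.floor_le _
          have h3 : (0:ℝ) < 2^(m+N) := by positivity
          have h1' : -((2:ℝ)^(m+N)) ≤ (⌊(2:ℝ)^(m+N)*c⌋:ℝ) := by
            have : ((-(2^(m+N):ℤ)):ℝ) ≤ (⌊(2:ℝ)^(m+N)*c⌋:ℝ) := by exact_mod_cast h1
            push_cast at this; linarith
          constructor
          · rw [hu, le_div_iff₀ h3]; linarith
          · rw [hu, div_le_iff₀ h3]; nlinarith [hc.2]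
        have hulow : ∀ N, c - (1/2:ℝ)^(m+N) ≤ u N := by
          intro N
          have h3 : (0:ℝ) < 2^(m+N) := by positivity
          rw [hu, le_div_iff₀ h3]
          have h4 := Int.lt_floor_add_one ((2:ℝ)^(m+N)*c)
          have h5 : (1/2:ℝ)^(m+N) * 2^(m+N) = 1 := by
            rw [div_pow, one_pow, div_mul_cancel₀]
            positivity
          nlinarith
        have huhigh : ∀ N, u N ≤ c := by
          intro N
          have h3 : (0:ℝ) < 2^(m+N) := by positivity
          rw [hu, div_le_iff₀ h3]
          have := Int.floor_le ((2:ℝ)^(m+N)*c)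
          linarith
        have hulim : Filter.Tendsto u Filter.atTop (nhds c) := by
          apply tendsto_of_tendsto_of_tendsto_of_le_of_le (g := fun N : ℕ => c - (1/2:ℝ)^(m+N))
            (h := fun _ : ℕ => c) _ tendsto_const_nhds hulow huhigh
          have h0 : Filter.Tendsto (fun N : ℕ => ((1:ℝ)/2)^N) Filter.atTop (nhds 0) :=
            tendsto_pow_atTop_nhds_zero_of_lt_one (by norm_num) (by norm_num)
          have h1 := h0.const_mul ((1/2:ℝ)^m)
          have h2 : Filter.Tendsto (fun N : ℕ => ((1:ℝ)/2)^(m+N)) Filter.atTop (nhds 0) := by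
            simpa [pow_add] using h1
          simpa using tendsto_const_nhds.sub h2
        have hflim : Filter.Tendsto (fun N => f (u N)) Filter.atTop (nhds (f c)) := by
          apply ((hf c hc).tendsto).comp
          exact tendsto_nhdsWithin_of_tendsto_nhds_of_eventually_within u hulim
            (Filter.Eventually.of_forall humem)
        have hbound : ∀ N, |f (u N) - f (u 0)| ≤ S * C * ((m:ℝ)+3)^2 * r^m := by
          intro N
          refine le_trans (tele_nat (fun N => f (u N)) (fun n => X (m+n+1)) N ?_) ?_
          · intro n hn
            have hs := hstep c hc (m+n)
            have e : m + (n+1) = (m+n) + 1 := by omega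
            simpa [hu, e] using hs
          · have hterm : ∀ n : ℕ, X (m+n+1) ≤ S*((m:ℝ)+3)^2*r^m * (((n:ℝ)+1)^2 * r^n) := by
              intro n
              have h1 := hXn (m+n+1)
              have hc1 : ((m+n+1:ℕ):ℝ) + 2 = (m:ℝ)+(n:ℝ)+3 := by push_cast; ring
              have h2 : r^(m+n+1) ≤ r^m * r^n := by
                have e : r^(m+n+1) = r^m * r^n * r := by rw [pow_add, pow_add, pow_one]
                rw [e]
                nlinarith [mul_pos (pow_pos hr0 m) (pow_pos hr0 n), hr1]
              have h3 : ((m:ℝ)+(n:ℝ)+3)^2 ≤ (((m:ℝ)+3)*((n:ℝ)+1))^2 := by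
                apply pow_le_pow_left₀ (by positivity)
                nlinarith [Nat.cast_nonneg (α := ℝ) m, Nat.cast_nonneg (α := ℝ) n]
              calc X (m+n+1) ≤ S * (((m+n+1:ℕ):ℝ)+2)^2 * r^(m+n+1) := h1
                _ = S * ((m:ℝ)+(n:ℝ)+3)^2 * r^(m+n+1) := by rw [hc1]
                _ ≤ S * ((((m:ℝ)+3)*((n:ℝ)+1))^2) * (r^m * r^n) := by
                    apply mul_le_mul (mul_le_mul_of_nonneg_left h3 hS0) h2
                      (by positivity) (by positivity)
                _ = S*((m:ℝ)+3)^2*r^m * (((n:ℝ)+1)^2 * r^n) := by ring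
            calc ∑ n ∈ Finset.range N, X (m+n+1)
                ≤ ∑ n ∈ Finset.range N, S*((m:ℝ)+3)^2*r^m * (((n:ℝ)+1)^2 * r^n) :=
                  Finset.sum_le_sum (fun n _ => hterm n)
              _ = S*((m:ℝ)+3)^2*r^m * ∑ n ∈ Finset.range N, (((n:ℝ)+1)^2*r^n) := by
                  rw [Finset.mul_sum]
              _ ≤ S*((m:ℝ)+3)^2*r^m * C := by
                  apply mul_le_mul_of_nonneg_left _ (by positivity)
                  exact Summable.sum_le_tsum _ (fun n _ => by positivity) hsumm
              _ = S*C*((m:ℝ)+3)^2*r^m := by ring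
        have habs : Filter.Tendsto (fun N => |f (u N) - f (u 0)|) Filter.atTop
            (nhds |f c - f (u 0)|) := (hflim.sub tendsto_const_nhds).abs
        have hfin := le_of_tendsto habs (Filter.Eventually.of_forall hbound)
        simpa [hu] using hfin
      -- horizontal step at level m
      have hhor : |f ((⌊(2:ℝ)^m*a⌋:ℝ)/2^m) - f ((⌊(2:ℝ)^m*b⌋:ℝ)/2^m)| ≤ 3 * X m := by
        set A : ℤ := ⌊(2:ℝ)^m*b⌋ with hA
        set B : ℤ := ⌊(2:ℝ)^m*a⌋ with hB
        have h2mp : (0:ℝ) < 2^m := by positivity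
        have hAB : A ≤ B := Int.floor_le_floor (by nlinarith)
        have hk3 : B - A ≤ 2 := by
          have h1 : (B:ℝ) ≤ 2^m * a := Int.floor_le _
          have h2 : 2^m * b < (A:ℝ) + 1 := Int.lt_floor_add_one _
          have h3 : (B:ℝ) - (A:ℝ) < 3 := by nlinarith [hδm]
          have h4 : ((B - A : ℤ):ℝ) < ((3:ℤ):ℝ) := by push_cast; linarith
          have := Int.lt_iff_add_one_le.mp (by exact_mod_cast h4)
          omega
        set k : ℕ := (B - A).toNat with hkdef
        have hk' : A + (k:ℤ) = B := by omega
        have hsteps : ∀ i : ℤ, A ≤ i → i < A + (k:ℤ) →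
            |(fun i : ℤ => f ((i:ℝ)/2^m)) (i+1) - (fun i : ℤ => f ((i:ℝ)/2^m)) i| ≤ X m := by
          intro i hi1 hi2
          have hiL : -(2^m:ℤ) ≤ i := le_trans (dy_lb b hb m) hi1
          have hiR : i ≤ 2^m - 1 := by
            have := dy_ub a ha m
            omega
          have hs := hsup m i hiL hiR
          show |f (((i+1:ℤ):ℝ)/2^m) - f ((i:ℝ)/2^m)| ≤ X m
          have e : ((i+1:ℤ):ℝ)/2^m = (i:ℝ)/2^m + 1/2^m := by push_cast; ring
          rw [e]
          exact hs
        have h4 := tele_int (fun i : ℤ => f ((i:ℝ)/2^m)) (X m) A k hsteps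
        rw [hk'] at h4
        calc |f ((B:ℝ)/2^m) - f ((A:ℝ)/2^m)| ≤ (k:ℝ) * X m := h4
          _ ≤ 3 * X m := by
              apply mul_le_mul_of_nonneg_right _ (hX0 m)
              exact_mod_cast (by omega : k ≤ 3)
      -- combine
      have hmain : |f a - f b| ≤ (3 + 2*C) * S * ((m:ℝ)+3)^2 * r^m := by
        have h1 := hvert a ha
        have h2 := hvert b hb
        have hXm' : X m ≤ S * ((m:ℝ)+3)^2 * r^m := by
          refine le_trans (hXn m) ?_
          have h5 : ((m:ℝ)+2)^2 ≤ ((m:ℝ)+3)^2 := by nlinarith [Nat.cast_nonneg (α := ℝ) m]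
          exact mul_le_mul_of_nonneg_right (mul_le_mul_of_nonneg_left h5 hS0)
            (pow_nonneg hr0.le m)
        have htri : |f a - f b| ≤ |f a - f ((⌊(2:ℝ)^m*a⌋:ℝ)/2^m)|
            + |f ((⌊(2:ℝ)^m*a⌋:ℝ)/2^m) - f ((⌊(2:ℝ)^m*b⌋:ℝ)/2^m)|
            + |f ((⌊(2:ℝ)^m*b⌋:ℝ)/2^m) - f b| := by
          calc |f a - f b| ≤ |f a - f ((⌊(2:ℝ)^m*a⌋:ℝ)/2^m)|
              + |f ((⌊(2:ℝ)^m*a⌋:ℝ)/2^m) - f b| := abs_sub_le _ _ _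
            _ ≤ _ := by
                have := abs_sub_le (f ((⌊(2:ℝ)^m*a⌋:ℝ)/2^m)) (f ((⌊(2:ℝ)^m*b⌋:ℝ)/2^m)) (f b)
                linarith
        have h2' : |f ((⌊(2:ℝ)^m*b⌋:ℝ)/2^m) - f b| ≤ S * C * ((m:ℝ)+3)^2 * r^m := by
          rw [abs_sub_comm]; exact h2
        calc |f a - f b| ≤ S * C * ((m:ℝ)+3)^2 * r^m + 3 * X m
            + S * C * ((m:ℝ)+3)^2 * r^m := by linarith
          _ ≤ S * C * ((m:ℝ)+3)^2 * r^m + 3 * (S * ((m:ℝ)+3)^2 * r^m)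
            + S * C * ((m:ℝ)+3)^2 * r^m := by linarith [hXm']
          _ = (3 + 2*C) * S * ((m:ℝ)+3)^2 * r^m := by ring
      have hfin2 : (3+2*C) * S * ((m:ℝ)+3)^2 * r^m
          ≤ θ * δ^((1:ℝ)/2) * (Real.log (4/δ))^2 * S := by
        have h1 : ((m:ℝ)+3)^2 * r^m ≤ (4/Real.log 2 * Real.log (4/δ))^2 * δ^((1:ℝ)/2) := by
          apply mul_le_mul (pow_le_pow_left₀ (by positivity) hm3 2) hrm
            (by positivity) (by positivity)
        calc (3+2*C)*S*((m:ℝ)+3)^2*r^m = (3+2*C)*S*(((m:ℝ)+3)^2*r^m) := by ring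
          _ ≤ (3+2*C)*S*((4/Real.log 2 * Real.log (4/δ))^2 * δ^((1:ℝ)/2)) := by
              apply mul_le_mul_of_nonneg_left h1 (mul_nonneg (by linarith) hS0)
          _ = θ * δ^((1:ℝ)/2) * (Real.log (4/δ))^2 * S := by rw [hθdef]; ring
      linarith
    rcases hxz.lt_or_gt with h | h
    · have h2 := key z x hz hx h
      rw [abs_sub_comm x z, abs_of_pos (by linarith : (0:ℝ) < z - x), abs_sub_comm (f x) (f z)]
      exact h2
    · have h2 := key x z hx hz h
      rw [abs_of_pos (by linarith : (0:ℝ) < x - z)]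
      exact h2
end

section
/- Let B be a standard one-dimensional Brownian motion with diffusion coefficient 2 (i.e., Var B(t) = 2t). There exists a constant C > 0 such that for all r, s > 0, P( sup over y ∈ ℝ and |z| ≤ r of [B(y) − B(z) − (y−z)²/4] ≥ s ) ≤ (r+1)·C·exp(−s^{3/2}/C). -/
open MeasureTheory ProbabilityTheory

/-- A two-sided Brownian motion with diffusion coefficient 2: continuous paths,
starts at 0, Gaussian increments with variance `2|t-s|`, and independent increments. -/
structure IsTwoSidedBM {Ω : Type*} [MeasureSpace Ω] (B : ℝ → Ω → ℝ) : Prop where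
  meas : ∀ t : ℝ, Measurable (B t)
  init : ∀ᵐ ω : Ω, B 0 ω = 0
  cont : ∀ᵐ ω : Ω, Continuous fun t => B t ω
  gauss : ∀ s t : ℝ, s ≤ t →
    Measure.map (fun ω => B t ω - B s ω) ℙ = gaussianReal 0 (Real.toNNReal (2*(t-s)))
  indep : ∀ (n : ℕ) (t : Fin (n+1) → ℝ), Monotone t →
    iIndepFun
      (fun i : Fin n => fun ω => B (t i.succ) ω - B (t i.castSucc) ω) ℙ

/-!
Write `y ∈ [m, m + 1]` and `z ∈ [k, k + 1]` with `m, k ∈ ℤ` and `n = |m - k|`. On the event,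
`B y - B z ≥ s + (y - z)² / 4`, and since `n ≤ |y - z| + 1` and `s ≥ 1` this is at least `3τ` for
`τ = (s + n²) / 24`; so one of the increments `B y - B m`, `B m - B k`, `B k - B z` is at least `τ`.
The middle one is Gaussian with variance `2n`, and the outer ones are controlled by a dyadic
chaining bound on the oscillation of `B` over a unit interval: each has probability
`≲ exp (-τ² / (n + 1))`, and `τ² / (n + 1) ≳ s^{3/2} + n`. Summing the geometric series over `n`
and the `2⌈r⌉ + 1 ≤ 3 (r + 1)` values of `k` gives the bound; for `s < 1` the right-hand side is
at least `1`.
-/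

open MeasureTheory ProbabilityTheory Real Filter Topology Set
open scoped NNReal

namespace ProbabilityTheory.HasSubgaussianMGF

variable {Ω : Type*} {m : MeasurableSpace Ω} {μ : Measure Ω} {X : Ω → ℝ} {c : ℝ≥0}

lemma mono (h : HasSubgaussianMGF X c μ) {c' : ℝ≥0} (hc : c ≤ c') :
    HasSubgaussianMGF X c' μ where
  integrable_exp_mul := h.integrable_exp_mul
  mgf_le t := (h.mgf_le t).trans <| exp_le_exp.mpr <| by gcongr

lemma measureReal_abs_ge_le (h : HasSubgaussianMGF X c μ) {ε : ℝ} (hε : 0 ≤ ε) :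
    μ.real {ω | ε ≤ |X ω|} ≤ 2 * exp (-ε ^ 2 / (2 * c)) := by
  have hsplit : {ω | ε ≤ |X ω|} = {ω | ε ≤ X ω} ∪ {ω | ε ≤ (-X) ω} := by
    ext ω; simp only [mem_ofPred_eq, mem_union, Pi.neg_apply, le_abs]
  calc μ.real {ω | ε ≤ |X ω|}
      ≤ μ.real {ω | ε ≤ X ω} + μ.real {ω | ε ≤ (-X) ω} := by
        rw [hsplit]; exact measureReal_union_le _ _
    _ ≤ exp (-ε ^ 2 / (2 * c)) + exp (-ε ^ 2 / (2 * c)) :=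
        add_le_add (h.measure_ge_le hε) (h.neg.measure_ge_le hε)
    _ = 2 * exp (-ε ^ 2 / (2 * c)) := by ring

end ProbabilityTheory.HasSubgaussianMGF

lemma ProbabilityTheory.hasSubgaussianMGF_of_map_eq_gaussianReal {Ω : Type*}
    {m : MeasurableSpace Ω} {μ : Measure Ω} {X : Ω → ℝ} {v : ℝ≥0}
    (hX : μ.map X = gaussianReal 0 v) : HasSubgaussianMGF X v μ := by
  have hXm : AEMeasurable X μ := aemeasurable_of_map_neZero (by rw [hX]; infer_instance)
  rw [← HasSubgaussianMGF.id_map_iff hXm, hX]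
  exact ⟨integrable_exp_mul_gaussianReal, fun t => by simp [mgf_id_gaussianReal]⟩

section Chaining

variable {f : ℝ → ℝ} {c : ℕ → ℝ}

lemma abs_sub_le_sum_of_dyadic
    (h : ∀ n j : ℕ, j < 2 ^ n → |f ((j + 1) / 2 ^ n) - f (j / 2 ^ n)| ≤ c n)
    (N : ℕ) {i : ℕ} (hi : i ≤ 2 ^ N) :
    |f (i / 2 ^ N) - f 0| ≤ ∑ n ∈ Finset.range (N + 1), c n := by
  induction N generalizing i with
  | zero =>
    interval_cases i
    · simpa using (abs_nonneg _).trans (h 0 0 one_pos)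
    · simpa using h 0 0 one_pos
  | succ N ih =>
    have hc : 0 ≤ c (N + 1) := (abs_nonneg _).trans (h (N + 1) 0 (by positivity))
    have hmid (j : ℕ) : (2 * j : ℝ) / 2 ^ (N + 1) = j / 2 ^ N := by rw [pow_succ]; field_simp
    rw [Finset.sum_range_succ _ (N + 1)]
    rw [pow_succ] at hi
    obtain ⟨j, rfl | rfl⟩ := Nat.even_or_odd' i
    · push_cast
      rw [hmid]
      linarith [ih (i := j) (by omega)]
    · have hstep := h (N + 1) (2 * j) (by omega)
      push_cast at hstep ⊢
      rw [hmid] at hstep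
      linarith [ih (i := j) (by omega),
        abs_sub_le (f ((2 * j + 1) / 2 ^ (N + 1))) (f (j / 2 ^ N)) (f 0)]

lemma abs_sub_le_tsum_of_dyadic (hf : Continuous f) (hc : Summable c)
    (h : ∀ n j : ℕ, j < 2 ^ n → |f ((j + 1) / 2 ^ n) - f (j / 2 ^ n)| ≤ c n)
    {t : ℝ} (ht : t ∈ Icc 0 1) : |f t - f 0| ≤ ∑' n, c n := by
  have hc0 : ∀ n, 0 ≤ c n := fun n => (abs_nonneg _).trans (h n 0 (by positivity))
  have hdyadic : Tendsto (fun N : ℕ => (⌊t * 2 ^ N⌋₊ : ℝ) / 2 ^ N) atTop (𝓝 t) :=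
    (tendsto_nat_floor_mul_div_atTop ht.1).comp
      (tendsto_pow_atTop_atTop_of_one_lt one_lt_two)
  refine le_of_tendsto ((hf.tendsto t).comp hdyadic |>.sub_const (f 0) |>.abs)
    (Eventually.of_forall fun N => ?_)
  have hfloor : ⌊t * 2 ^ N⌋₊ ≤ 2 ^ N := Nat.floor_le_of_le (by
    push_cast; nlinarith [ht.2, pow_pos (two_pos (α := ℝ)) N])
  exact (abs_sub_le_sum_of_dyadic h N hfloor).trans (hc.sum_le_tsum _ fun n _ => hc0 n)

end Chaining

lemma two_pow_mul_exp_le {a : ℝ} (ha : 64 ≤ a) (n : ℕ) :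
    2 ^ n * exp (-(a ^ 2 * (9 / 8) ^ n / 256)) ≤ exp (-(a ^ 2 / 256)) * (1 / 2) ^ n := by
  have hbernoulli : 1 + n * (1 / 8 : ℝ) ≤ (9 / 8) ^ n := by
    have h := one_add_mul_le_pow (show (-2 : ℝ) ≤ 1 / 8 by norm_num) n
    rwa [show (1 : ℝ) + 1 / 8 = 9 / 8 by norm_num] at h
  have hexponent : a ^ 2 / 256 + 2 * n ≤ a ^ 2 * (9 / 8) ^ n / 256 := by
    have ha2 : 4096 ≤ a ^ 2 := by nlinarith
    nlinarith [mul_le_mul_of_nonneg_left hbernoulli (sq_nonneg a), Nat.cast_nonneg (α := ℝ) n]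
  have hexp_two : 4 ≤ exp 2 := by
    rw [show (2 : ℝ) = 1 + 1 by norm_num, exp_add]
    nlinarith [add_one_le_exp (1 : ℝ)]
  have hbase : 2 * exp (-2) ≤ 1 / 2 := by
    rw [exp_neg]; field_simp; linarith
  calc 2 ^ n * exp (-(a ^ 2 * (9 / 8) ^ n / 256))
      ≤ 2 ^ n * (exp (-(a ^ 2 / 256)) * exp (-2) ^ n) := by
        rw [← exp_nat_mul, ← exp_add]
        gcongr
        linarith
    _ = exp (-(a ^ 2 / 256)) * (2 * exp (-2)) ^ n := by ring
    _ ≤ exp (-(a ^ 2 / 256)) * (1 / 2) ^ n := by gcongr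

lemma add_one_mul_rpow_add_le {s n : ℝ} (hs : 1 ≤ s) :
    (n + 1) * (s ^ ((3 : ℝ) / 2) + n) ≤ 2 * (s + n ^ 2) ^ 2 := by
  obtain ⟨u, hu, rfl⟩ : ∃ u, 1 ≤ u ∧ s = u ^ 2 :=
    ⟨√s, Real.one_le_sqrt.mpr hs, (sq_sqrt (by linarith)).symm⟩
  have hu3 : (u ^ 2) ^ ((3 : ℝ) / 2) = u ^ 3 := by
    rw [← rpow_natCast u 2, ← rpow_mul (by linarith),
      show ((2 : ℕ) : ℝ) * (3 / 2) = (3 : ℕ) by norm_num, rpow_natCast]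
  rw [hu3]
  nlinarith [sq_nonneg (n * u - u ^ 2), sq_nonneg (n - 1),
    mul_le_mul_of_nonneg_left hu (sq_nonneg n), pow_le_pow_right₀ hu (show 3 ≤ 4 by norm_num)]

lemma tsum_ofReal_exp_neg_div_le {C : ℝ} (hC : 0 < C) :
    ∑' n : ℕ, ENNReal.ofReal (exp (-(n / C))) ≤ ENNReal.ofReal (C + 1) := by
  set ρ := exp (-(1 / C))
  have hρ_pow (n : ℕ) : exp (-(n / C)) = ρ ^ n := by rw [← exp_nat_mul]; ring_nf
  have hρ1 : ρ < 1 := exp_lt_one_iff.mpr (by simp [hC])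
  have hρC : ρ * (C + 1) ≤ C := by
    have h : ρ * (1 + 1 / C) ≤ 1 := by
      calc ρ * (1 + 1 / C) ≤ ρ * exp (1 / C) := by gcongr; linarith [add_one_le_exp (1 / C)]
        _ = 1 := by rw [← exp_add]; simp
    have hCC : C * (1 + 1 / C) = C + 1 := by field_simp
    nlinarith
  simp_rw [hρ_pow]
  rw [← ENNReal.ofReal_tsum_of_nonneg (fun n => by positivity)
    (summable_geometric_of_lt_one (by positivity) hρ1),
    tsum_geometric_of_lt_one (by positivity) hρ1]
  refine ENNReal.ofReal_le_ofReal ?_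
  rw [inv_le_iff_one_le_mul₀ (by linarith)]
  nlinarith

lemma card_Icc_neg_ceil_le {r : ℝ} (hr : 0 ≤ r) :
    ((Finset.Icc (-⌈r⌉) ⌈r⌉).card : ℝ) ≤ 3 * (r + 1) := by
  have hceil := Int.ceil_nonneg hr
  rw [Int.card_Icc, ← Int.cast_natCast, Int.toNat_of_nonneg (by omega)]
  push_cast
  linarith [Int.ceil_lt_add_one r]

lemma one_le_mul_exp_of_lt_one {C r s : ℝ} (hC : 2 ≤ C) (hr : 0 ≤ r) (hs : 0 ≤ s)
    (hs1 : s < 1) :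
    1 ≤ (r + 1) * C * exp (-(s ^ ((3 : ℝ) / 2)) / C) := by
  have hS : s ^ ((3 : ℝ) / 2) ≤ 1 := rpow_le_one hs hs1.le (by norm_num)
  have hexp : 1 / 2 ≤ exp (-(s ^ ((3 : ℝ) / 2)) / C) := by
    have : s ^ ((3 : ℝ) / 2) / C ≤ 1 / 2 := by
      rw [div_le_iff₀ (by linarith)]; linarith
    linarith [add_one_le_exp (-(s ^ ((3 : ℝ) / 2)) / C), neg_div C (s ^ ((3 : ℝ) / 2))]
  have hCexp : 1 ≤ C * exp (-(s ^ ((3 : ℝ) / 2)) / C) := by nlinarith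
  nlinarith [mul_le_mul_of_nonneg_right (show 1 ≤ r + 1 by linarith) (zero_le_one.trans hCexp)]

def blockEvent {Ω : Type*} (B : ℝ → Ω → ℝ) (τ u w : ℝ) : Set Ω :=
  {ω | ∃ t ∈ Icc u (u + 1), τ ≤ |B t ω - B u ω|} ∪
    {ω | ∃ t ∈ Icc w (w + 1), τ ≤ |B t ω - B w ω|} ∪ {ω | τ ≤ |B u ω - B w ω|}

section Decomposition

variable {Ω : Type*} {B : ℝ → Ω → ℝ}

lemma natAbs_floor_sub_floor_le (y z : ℝ) : ((⌊y⌋ - ⌊z⌋).natAbs : ℝ) ≤ |y - z| + 1 := by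
  rw [Nat.cast_natAbs, Int.cast_abs, Int.cast_sub, abs_le]
  constructor <;> linarith [Int.floor_le y, Int.lt_floor_add_one y, Int.floor_le z,
    Int.lt_floor_add_one z, le_abs_self (y - z), neg_abs_le (y - z)]

lemma mem_blockEvent_floor {ω : Ω} {s y z : ℝ} (hs : 1 ≤ s)
    (hyz : s ≤ B y ω - B z ω - (y - z) ^ 2 / 4) :
    ω ∈ blockEvent B ((s + (⌊y⌋ - ⌊z⌋).natAbs ^ 2) / 24) ⌊y⌋ ⌊z⌋ := by
  set n : ℝ := ((⌊y⌋ - ⌊z⌋).natAbs : ℝ)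
  have hn : n ≤ |y - z| + 1 := natAbs_floor_sub_floor_le y z
  have hn2 : n ^ 2 ≤ 2 * (y - z) ^ 2 + 2 := by
    nlinarith [sq_abs (y - z), sq_nonneg (|y - z| - 1),
      mul_le_mul hn hn (Nat.cast_nonneg _) (by positivity)]
  have h3τ : 3 * ((s + n ^ 2) / 24) ≤ B y ω - B z ω := by linarith
  by_contra h
  simp only [blockEvent, mem_union, mem_ofPred_eq, not_or, not_exists, not_and, not_le] at h
  obtain ⟨⟨hy, hz⟩, hmk⟩ := h
  have hym := hy y ⟨Int.floor_le y, (Int.lt_floor_add_one y).le⟩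
  have hzk := hz z ⟨Int.floor_le z, (Int.lt_floor_add_one z).le⟩
  linarith [le_abs_self (B y ω - B ⌊y⌋ ω), le_abs_self (B ⌊y⌋ ω - B ⌊z⌋ ω),
    neg_abs_le (B z ω - B ⌊z⌋ ω)]

lemma subset_iUnion_blockEvent {r s : ℝ} (hs : 1 ≤ s) :
    {ω | ∃ y z : ℝ, |z| ≤ r ∧ s ≤ B y ω - B z ω - (y - z) ^ 2 / 4} ⊆
      ⋃ k ∈ Finset.Icc (-⌈r⌉) ⌈r⌉, ⋃ n : ℕ, (blockEvent B ((s + n ^ 2) / 24) (k + n) k ∪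
        blockEvent B ((s + n ^ 2) / 24) (k - n) k) := by
  rintro ω ⟨y, z, hz, hyz⟩
  have hk : ⌊z⌋ ∈ Finset.Icc (-⌈r⌉) ⌈r⌉ := by
    rw [Finset.mem_Icc, ← Int.floor_neg]
    exact ⟨Int.floor_mono (neg_le_of_abs_le hz),
      (Int.floor_mono (le_of_abs_le hz)).trans (Int.floor_le_ceil r)⟩
  simp only [mem_iUnion]
  refine ⟨⌊z⌋, hk, (⌊y⌋ - ⌊z⌋).natAbs, ?_⟩
  have hmem := mem_blockEvent_floor hs hyz
  rcases Int.natAbs_eq (⌊y⌋ - ⌊z⌋) with h | h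
  · left
    have hy : (⌊y⌋ : ℝ) = ⌊z⌋ + (⌊y⌋ - ⌊z⌋).natAbs := by
      have := congrArg (Int.cast (R := ℝ)) h
      rw [Int.cast_sub, Int.cast_natCast] at this
      linarith
    rwa [hy] at hmem
  · right
    have hy : (⌊y⌋ : ℝ) = ⌊z⌋ - (⌊y⌋ - ⌊z⌋).natAbs := by
      have := congrArg (Int.cast (R := ℝ)) h
      rw [Int.cast_sub, Int.cast_neg, Int.cast_natCast] at this
      linarith
    rwa [hy] at hmem

end Decomposition

namespace IsTwoSidedBM

variable {Ω : Type*} [MeasureSpace Ω] {B : ℝ → Ω → ℝ}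

lemma hasSubgaussianMGF_sub (hB : IsTwoSidedBM B) (u w : ℝ) :
    HasSubgaussianMGF (fun ω => B w ω - B u ω) (2 * |w - u|).toNNReal ℙ := by
  rcases le_total u w with huw | hwu
  · rw [abs_of_nonneg (sub_nonneg.mpr huw)]
    exact hasSubgaussianMGF_of_map_eq_gaussianReal (hB.gauss u w huw)
  · have h := (hasSubgaussianMGF_of_map_eq_gaussianReal (hB.gauss w u hwu)).neg
    rw [abs_sub_comm, abs_of_nonneg (sub_nonneg.mpr hwu)]
    simpa only [Pi.neg_def, neg_sub] using h

section Finite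

variable [IsFiniteMeasure (ℙ : Measure Ω)]

lemma measure_le_abs_sub_le (hB : IsTwoSidedBM B) {u w L a : ℝ} (hL : |w - u| ≤ L)
    (ha : 0 ≤ a) :
    ℙ {ω | a ≤ |B w ω - B u ω|} ≤ ENNReal.ofReal (2 * exp (-a ^ 2 / (4 * L))) := by
  have h := ((hB.hasSubgaussianMGF_sub u w).mono (c' := (2 * L).toNNReal)
    (by gcongr)).measureReal_abs_ge_le ha
  rw [Real.coe_toNNReal _ (by linarith [abs_nonneg (w - u)]),
    show (2 : ℝ) * (2 * L) = 4 * L by ring] at h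
  rw [← ofReal_measureReal]
  exact ENNReal.ofReal_le_ofReal h

lemma measure_exists_le_abs_sub_le_of_le (hB : IsTwoSidedBM B) (u : ℝ) {a : ℝ} (ha : 64 ≤ a) :
    ℙ {ω | ∃ t ∈ Icc u (u + 1), a ≤ |B t ω - B u ω|} ≤
      ENNReal.ofReal (4 * exp (-(a ^ 2 / 256))) := by
  -- thresholds summing to `a / 2` and decaying slower than the `2 ^ (-n / 2)` scale of the
  -- level-`n` dyadic increments
  set c : ℕ → ℝ := fun n => a / 8 * (3 / 4) ^ n with hc_def
  have hc : HasSum c (a / 2) := by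
    have h := (hasSum_geometric_of_lt_one (r := (3 / 4 : ℝ)) (by norm_num) (by norm_num)).mul_left
      (a / 8)
    rwa [show a / 8 * (1 - 3 / 4)⁻¹ = a / 2 by ring] at h
  set bad : ℕ → ℕ → Set Ω := fun n j =>
    {ω | c n ≤ |B (u + (j + 1) / 2 ^ n) ω - B (u + j / 2 ^ n) ω|}
  -- on a continuous path avoiding every `bad n j`, chaining bounds the oscillation by `a / 2`
  have hcover : {ω | ∃ t ∈ Icc u (u + 1), a ≤ |B t ω - B u ω|} ≤ᵐ[ℙ]
      (⋃ n, ⋃ j ∈ Finset.range (2 ^ n), bad n j : Set Ω) := by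
    filter_upwards [hB.cont] with ω hcont ⟨t, ht, hat⟩
    change ω ∈ ⋃ n, ⋃ j ∈ Finset.range (2 ^ n), bad n j
    by_contra hgood
    simp only [mem_iUnion, Finset.mem_range, not_exists, bad, mem_ofPred_eq, not_le] at hgood
    have hchain := abs_sub_le_tsum_of_dyadic (f := fun t => B (u + t) ω)
      (by fun_prop) hc.summable (fun n j hj => by simpa [add_div] using (hgood n j hj).le)
      (t := t - u) ⟨by linarith [ht.1], by linarith [ht.2]⟩
    simp only [add_sub_cancel, add_zero, hc.tsum_eq] at hchain
    linarith
  have hbad : ∀ n j, ℙ (bad n j) ≤ ENNReal.ofReal (2 * exp (-(a ^ 2 * (9 / 8) ^ n / 256))) := by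
    intro n j
    refine (hB.measure_le_abs_sub_le (L := 1 / 2 ^ n) (le_of_eq ?_) (by positivity)).trans_eq ?_
    · have : u + (j + 1) / 2 ^ n - (u + j / 2 ^ n) = 1 / 2 ^ n := by ring
      rw [this, abs_of_pos (by positivity)]
    · congr 3
      rw [show (9 / 8 : ℝ) ^ n = (3 / 4) ^ (2 * n) * 2 ^ n by
        rw [pow_mul, ← mul_pow]; norm_num]
      field_simp
      ring
  have hgeom : HasSum (fun n : ℕ => 2 * exp (-(a ^ 2 / 256)) * (1 / 2) ^ n)
      (4 * exp (-(a ^ 2 / 256))) := by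
    have h := hasSum_geometric_two.mul_left (2 * exp (-(a ^ 2 / 256)))
    rwa [show 2 * exp (-(a ^ 2 / 256)) * 2 = 4 * exp (-(a ^ 2 / 256)) by ring] at h
  calc ℙ {ω | ∃ t ∈ Icc u (u + 1), a ≤ |B t ω - B u ω|}
      ≤ ℙ (⋃ n, ⋃ j ∈ Finset.range (2 ^ n), bad n j) := measure_mono_ae hcover
    _ ≤ ∑' n, ∑ j ∈ Finset.range (2 ^ n), ℙ (bad n j) :=
        (measure_iUnion_le _).trans (ENNReal.tsum_le_tsum fun n => measure_biUnion_finset_le _ _)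
    _ ≤ ∑' n : ℕ, ENNReal.ofReal (2 * exp (-(a ^ 2 / 256)) * (1 / 2) ^ n) := by
        refine ENNReal.tsum_le_tsum fun n => (Finset.sum_le_sum fun j _ => hbad n j).trans ?_
        rw [Finset.sum_const, Finset.card_range, nsmul_eq_mul, ← ENNReal.ofReal_natCast,
          ← ENNReal.ofReal_mul (by positivity)]
        refine ENNReal.ofReal_le_ofReal ?_
        push_cast
        nlinarith [two_pow_mul_exp_le ha n]
    _ = ENNReal.ofReal (4 * exp (-(a ^ 2 / 256))) := by
        rw [← ENNReal.ofReal_tsum_of_nonneg (fun n => by positivity) hgeom.summable, hgeom.tsum_eq]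

end Finite

variable [IsProbabilityMeasure (ℙ : Measure Ω)]

lemma measure_exists_le_abs_sub_le (hB : IsTwoSidedBM B) (u : ℝ) {a : ℝ} (ha : 0 ≤ a) :
    ℙ {ω | ∃ t ∈ Icc u (u + 1), a ≤ |B t ω - B u ω|} ≤
      ENNReal.ofReal (4096 * exp (-(a ^ 2 / 4096))) := by
  by_cases ha64 : 64 ≤ a
  · refine (hB.measure_exists_le_abs_sub_le_of_le u ha64).trans (ENNReal.ofReal_le_ofReal ?_)
    gcongr <;> norm_num
  · refine prob_le_one.trans ?_
    rw [← ENNReal.ofReal_one]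
    refine ENNReal.ofReal_le_ofReal ?_
    have hexp_one : exp 1 ≤ 4096 := by linarith [exp_one_lt_d9]
    calc (1 : ℝ) ≤ 4096 * exp (-1) := by
          rw [exp_neg, ← div_eq_mul_inv, one_le_div (exp_pos 1)]; exact hexp_one
      _ ≤ 4096 * exp (-(a ^ 2 / 4096)) := by
          gcongr
          rw [div_le_one (by norm_num)]
          nlinarith

lemma measure_blockEvent_le (hB : IsTwoSidedBM B) {τ L u w : ℝ} (hτ : 0 ≤ τ) (hL : 1 ≤ L)
    (huw : |u - w| ≤ L) :
    ℙ (blockEvent B τ u w) ≤ ENNReal.ofReal (12288 * exp (-(τ ^ 2 / (4096 * L)))) := by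
  set bound := ENNReal.ofReal (4096 * exp (-(τ ^ 2 / (4096 * L))))
  have hosc (v : ℝ) : ℙ {ω | ∃ t ∈ Icc v (v + 1), τ ≤ |B t ω - B v ω|} ≤ bound := by
    refine (hB.measure_exists_le_abs_sub_le v hτ).trans (ENNReal.ofReal_le_ofReal ?_)
    have : τ ^ 2 / (4096 * L) ≤ τ ^ 2 / 4096 :=
      div_le_div_of_nonneg_left (sq_nonneg τ) (by norm_num) (by linarith)
    gcongr
  have hincr : ℙ {ω | τ ≤ |B u ω - B w ω|} ≤ bound := by
    refine (hB.measure_le_abs_sub_le huw hτ).trans (ENNReal.ofReal_le_ofReal ?_)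
    have : τ ^ 2 / (4096 * L) ≤ τ ^ 2 / (4 * L) :=
      div_le_div_of_nonneg_left (sq_nonneg τ) (by positivity) (by linarith)
    rw [neg_div]
    gcongr
    norm_num
  calc ℙ (blockEvent B τ u w) ≤ bound + bound + bound :=
        (measure_union_le _ _).trans
          (add_le_add ((measure_union_le _ _).trans (add_le_add (hosc u) (hosc w))) hincr)
    _ = ENNReal.ofReal (12288 * exp (-(τ ^ 2 / (4096 * L)))) := by
        rw [← ENNReal.ofReal_add (by positivity) (by positivity),
          ← ENNReal.ofReal_add (by positivity) (by positivity)]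
        ring_nf

lemma measure_iUnion_blockEvent_le (hB : IsTwoSidedBM B) {s : ℝ} (hs : 1 ≤ s) (k : ℝ) :
    ℙ (⋃ n : ℕ, (blockEvent B ((s + n ^ 2) / 24) (k + n) k ∪
        blockEvent B ((s + n ^ 2) / 24) (k - n) k)) ≤
      ENNReal.ofReal (24576 * 4718593 * exp (-(s ^ ((3 : ℝ) / 2) / 4718592))) := by
  set S := s ^ ((3 : ℝ) / 2)
  have hterm (n : ℕ) : ℙ (blockEvent B ((s + n ^ 2) / 24) (k + n) k ∪
      blockEvent B ((s + n ^ 2) / 24) (k - n) k) ≤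
      ENNReal.ofReal (24576 * exp (-(S / 4718592))) * ENNReal.ofReal (exp (-(n / 4718592))) := by
    -- `4718592 = 2 * 24 ^ 2 * 4096`
    have hexponent : (S + n) / 4718592 ≤ ((s + n ^ 2) / 24) ^ 2 / (4096 * (n + 1)) := by
      rw [div_le_div_iff₀ (by norm_num) (by positivity)]
      nlinarith [add_one_mul_rpow_add_le (n := n) hs]
    have hblock (w : ℝ) (hw : |w - k| = n) : ℙ (blockEvent B ((s + n ^ 2) / 24) w k) ≤
        ENNReal.ofReal (12288 * exp (-((S + n) / 4718592))) :=
      (hB.measure_blockEvent_le (L := n + 1) (by positivity)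
        (by linarith [n.cast_nonneg (α := ℝ)]) (by linarith)).trans (by gcongr)
    refine (measure_union_le _ _).trans
      ((add_le_add (hblock _ (by simp)) (hblock _ (by simp))).trans_eq ?_)
    rw [← ENNReal.ofReal_add (by positivity) (by positivity),
      ← ENNReal.ofReal_mul (by positivity), mul_assoc, ← exp_add]
    ring_nf
  calc _ ≤ ∑' n : ℕ, ENNReal.ofReal (24576 * exp (-(S / 4718592))) *
        ENNReal.ofReal (exp (-(n / 4718592))) :=
        (measure_iUnion_le _).trans (ENNReal.tsum_le_tsum hterm)
    _ ≤ ENNReal.ofReal (24576 * exp (-(S / 4718592))) * ENNReal.ofReal (4718592 + 1) := by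
        rw [ENNReal.tsum_mul_left]
        gcongr
        exact tsum_ofReal_exp_neg_div_le (by norm_num)
    _ = _ := by
        rw [← ENNReal.ofReal_mul (by positivity)]
        ring_nf

lemma measure_sup_ge_le_of_one_le (hB : IsTwoSidedBM B) {C r s : ℝ}
    (hC : 73728 * 4718593 ≤ C) (hr : 0 ≤ r) (hs : 1 ≤ s) :
    ℙ {ω | ∃ y z : ℝ, |z| ≤ r ∧ s ≤ B y ω - B z ω - (y - z) ^ 2 / 4} ≤
      ENNReal.ofReal ((r + 1) * C * exp (-(s ^ ((3 : ℝ) / 2)) / C)) := by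
  set S := s ^ ((3 : ℝ) / 2)
  have hexp : exp (-(S / 4718592)) ≤ exp (-S / C) := by
    rw [neg_div]
    gcongr
    linarith
  calc _ ≤ ∑ k ∈ Finset.Icc (-⌈r⌉) ⌈r⌉, ℙ (⋃ n : ℕ, (blockEvent B ((s + n ^ 2) / 24) (k + n) k ∪
          blockEvent B ((s + n ^ 2) / 24) (k - n) k)) :=
        (measure_mono (subset_iUnion_blockEvent hs)).trans (measure_biUnion_finset_le _ _)
    _ ≤ ∑ k ∈ Finset.Icc (-⌈r⌉) ⌈r⌉,
          ENNReal.ofReal (24576 * 4718593 * exp (-(S / 4718592))) :=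
        Finset.sum_le_sum fun k _ => hB.measure_iUnion_blockEvent_le hs k
    _ = ENNReal.ofReal
          ((Finset.Icc (-⌈r⌉) ⌈r⌉).card * (24576 * 4718593 * exp (-(S / 4718592)))) := by
        rw [Finset.sum_const, nsmul_eq_mul, ENNReal.ofReal_mul (Nat.cast_nonneg _),
          ENNReal.ofReal_natCast]
    _ ≤ ENNReal.ofReal ((r + 1) * C * exp (-S / C)) := by
        refine ENNReal.ofReal_le_ofReal ?_
        calc _ ≤ 3 * (r + 1) * (24576 * 4718593 * exp (-S / C)) := by
              gcongr
              exact card_Icc_neg_ceil_le hr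
          _ = (r + 1) * (73728 * 4718593) * exp (-S / C) := by ring
          _ ≤ (r + 1) * C * exp (-S / C) := by gcongr

end IsTwoSidedBM

theorem stmt_10 :
    ∃ C : ℝ, 0 < C ∧
      ∀ (Ω : Type) [MeasureSpace Ω] [IsProbabilityMeasure (ℙ : Measure Ω)]
        (B : ℝ → Ω → ℝ), IsTwoSidedBM B →
        ∀ r s : ℝ, 0 < r → 0 < s →
          ℙ {ω | ∃ y z : ℝ, |z| ≤ r ∧ s ≤ B y ω - B z ω - (y-z)^2/4}
            ≤ ENNReal.ofReal ((r+1) * C * Real.exp (-(s ^ ((3:ℝ)/2))/C)) := by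
  refine ⟨73728 * 4718593, by norm_num, fun Ω _ _ B hB r s hr hs => ?_⟩
  rcases lt_or_ge s 1 with hs1 | hs1
  · refine prob_le_one.trans ?_
    rw [← ENNReal.ofReal_one]
    exact ENNReal.ofReal_le_ofReal (one_le_mul_exp_of_lt_one (by norm_num) hr.le hs.le hs1)
  · exact hB.measure_sup_ge_le_of_one_le le_rfl hr.le hs1
end

section
/- Let B be a two-sided Brownian motion on ℝ with diffusion coefficient 2. There exists C > 0 such that for all r > 0, P( there exists z ∈ ℝ with B(z) ≥ r²/8 + z²/8 ) ≤ C·exp(−r³/C). -/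
open MeasureTheory ProbabilityTheory

/-!
Split the line into the blocks `⌊|z|⌋ = n`. On such a block the parabola `r²/8 + z²/8` is at least
twice `bₙ = (r² + n²)/16`, so a crossing forces `B - B 0` or its time reversal `t ↦ B (-t)` to
exceed `bₙ` somewhere on `[0, n + 1]`. By continuity it suffices to look at dyadic times, where
Lévy's maximal inequality (independent increments with median `0`) and the Gaussian Chernoff bound
give `2 exp (-bₙ² / (4 (n + 1))) ≤ 2 exp (-(r³ + n) / 4096)` once `r ≥ 1`. Summing the geometric
series over `n` gives the claim; `r ≤ 1` is absorbed into the constant.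
-/

open Real Set Finset Function
open scoped ENNReal NNReal

namespace ProbabilityTheory

lemma inv_two_le_gaussianReal_Ici_zero (v : ℝ≥0) : (2 : ℝ≥0∞)⁻¹ ≤ gaussianReal 0 v (Ici 0) := by
  have h_symm : gaussianReal 0 v (Iic 0) = gaussianReal 0 v (Ici 0) := by
    conv_lhs => rw [← neg_zero, ← gaussianReal_map_neg (μ := 0),
      Measure.map_apply measurable_neg measurableSet_Iic]
    congr 1; ext; simp
  have h_cover : (1 : ℝ≥0∞) ≤ 2 * gaussianReal 0 v (Ici 0) := by
    calc (1 : ℝ≥0∞) = gaussianReal 0 v (Ici 0 ∪ Iic 0) := by simp [Set.Ici_union_Iic]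
      _ ≤ gaussianReal 0 v (Ici 0) + gaussianReal 0 v (Iic 0) := measure_union_le _ _
      _ = 2 * gaussianReal 0 v (Ici 0) := by rw [h_symm, two_mul]
  rwa [ENNReal.inv_le_iff_le_mul (by simp) (by simp)]

lemma hasSubgaussianMGF_id_gaussianReal (v : ℝ≥0) : HasSubgaussianMGF id v (gaussianReal 0 v) where
  integrable_exp_mul := integrable_exp_mul_gaussianReal
  mgf_le t := by simp [mgf_id_gaussianReal]

section Levy

variable {Ω : Type*}

def firstPassage (S : ℕ → Ω → ℝ) (b : ℝ) (k : ℕ) : Set Ω :=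
  {ω | b < S k ω ∧ ∀ j < k, S j ω ≤ b}

lemma pairwise_disjoint_firstPassage (S : ℕ → Ω → ℝ) (b : ℝ) :
    Pairwise (Disjoint on firstPassage S b) := by
  intro k l hkl
  wlog h : k < l generalizing k l
  · exact (this hkl.symm (hkl.lt_or_gt.resolve_left h)).symm
  exact Set.disjoint_left.2 fun _ hk hl => (hl.2 k h).not_gt hk.1

lemma setOf_exists_le_lt_eq_biUnion_firstPassage (S : ℕ → Ω → ℝ) (b : ℝ) (N : ℕ) :
    {ω | ∃ k ≤ N, b < S k ω} = ⋃ k ∈ range (N + 1), firstPassage S b k := by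
  classical
  ext ω
  simp only [Set.mem_ofPred_eq, Set.mem_iUnion, Finset.mem_range, firstPassage]
  constructor
  · rintro ⟨k, hkN, hk⟩
    have h : ∃ k, b < S k ω := ⟨k, hk⟩
    exact ⟨Nat.find h, by have := Nat.find_min' h hk; omega, Nat.find_spec h,
      fun j hj => not_lt.1 (Nat.find_min h hj)⟩
  · rintro ⟨k, hkN, hk, -⟩
    exact ⟨k, by omega, hk⟩

lemma measurableSet_firstPassage {m : MeasurableSpace Ω} {S : ℕ → Ω → ℝ} {k : ℕ}
    (hS : ∀ j ≤ k, Measurable[m] (S j)) (b : ℝ) : MeasurableSet[m] (firstPassage S b k) := by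
  simp only [firstPassage, Set.ofPred_and, Set.ofPred_forall]
  exact (measurableSet_lt measurable_const (hS k le_rfl)).inter
    (.iInter fun j => .iInter fun hj => measurableSet_le (hS j hj.le) measurable_const)

variable [MeasurableSpace Ω] {μ : Measure Ω} {X : ℕ → Ω → ℝ}

lemma measure_firstPassage_inter_eq_mul (hX : ∀ i, Measurable (X i)) (h_indep : iIndepFun X μ)
    (b : ℝ) (k N : ℕ) :
    μ (firstPassage (fun j ω => ∑ i ∈ range j, X i ω) b k ∩ {ω | 0 ≤ ∑ i ∈ Ico k N, X i ω})
      = μ (firstPassage (fun j ω => ∑ i ∈ range j, X i ω) b k) * μ {ω | 0 ≤ ∑ i ∈ Ico k N, X i ω} := by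
  have h := indep_iSup_of_disjoint (fun i => (hX i).comap_le)
    ((iIndepFun_iff_iIndep _ _ _).1 h_indep) (Set.Iio_disjoint_Ici (a := k) le_rfl)
  refine (Indep_iff _ _ _).1 h _ _ (measurableSet_firstPassage (fun j hj => ?_) b)
    (measurableSet_le measurable_const (Finset.measurable_sum _ fun i hi => ?_))
  · refine Finset.measurable_sum _ fun i hi => (comap_measurable (X i)).mono ?_ le_rfl
    exact le_iSup₂ (f := fun i (_ : i ∈ Set.Iio k) => MeasurableSpace.comap (X i) _) i
      ((Finset.mem_range.1 hi).trans_le hj)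
  · refine (comap_measurable (X i)).mono ?_ le_rfl
    exact le_iSup₂ (f := fun i (_ : i ∈ Set.Ici k) => MeasurableSpace.comap (X i) _) i
      (Finset.mem_Ico.1 hi).1

theorem levy_maximal_ineq (hX : ∀ i, Measurable (X i)) (h_indep : iIndepFun X μ) (N : ℕ)
    (h_med : ∀ k ≤ N, (2 : ℝ≥0∞)⁻¹ ≤ μ {ω | 0 ≤ ∑ i ∈ Ico k N, X i ω}) (b : ℝ) :
    μ {ω | ∃ k ≤ N, b < ∑ i ∈ range k, X i ω} ≤ 2 * μ {ω | b < ∑ i ∈ range N, X i ω} := by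
  set S : ℕ → Ω → ℝ := fun k ω => ∑ i ∈ range k, X i ω
  set A := firstPassage S b
  set C : ℕ → Set Ω := fun k => {ω | 0 ≤ ∑ i ∈ Ico k N, X i ω}
  have hA : ∀ k, MeasurableSet (A k) := fun k =>
    measurableSet_firstPassage (fun j _ => Finset.measurable_sum _ fun i _ => hX i) b
  have hC : ∀ k, MeasurableSet (C k) := fun k =>
    measurableSet_le measurable_const (Finset.measurable_sum _ fun i _ => hX i)
  have h_disj := pairwise_disjoint_firstPassage S b
  have h_disj' : Pairwise (Disjoint on fun k => A k ∩ C k) := fun k l hkl =>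
    (h_disj hkl).mono Set.inter_subset_left Set.inter_subset_left
  calc μ {ω | ∃ k ≤ N, b < S k ω} = ∑ k ∈ range (N + 1), μ (A k) := by
        rw [setOf_exists_le_lt_eq_biUnion_firstPassage,
          measure_biUnion_finset (h_disj.set_pairwise _) fun k _ => hA k]
    _ ≤ ∑ k ∈ range (N + 1), 2 * μ (A k ∩ C k) := by
        gcongr with k hk
        rw [measure_firstPassage_inter_eq_mul hX h_indep, ← mul_assoc, mul_comm 2, mul_assoc]
        refine le_mul_of_one_le_right' ?_
        calc (1 : ℝ≥0∞) = 2 * 2⁻¹ := (ENNReal.mul_inv_cancel two_ne_zero ENNReal.ofNat_ne_top).symm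
          _ ≤ 2 * μ (C k) := by gcongr; exact h_med k (by simpa [Nat.lt_succ_iff] using hk)
    _ = 2 * μ (⋃ k ∈ range (N + 1), A k ∩ C k) := by
        rw [measure_biUnion_finset (h_disj'.set_pairwise _) fun k _ => (hA k).inter (hC k),
          Finset.mul_sum]
    _ ≤ 2 * μ {ω | b < S N ω} := by
        gcongr
        refine Set.iUnion₂_subset fun k hk ω ⟨⟨hbk, _⟩, (hC : 0 ≤ ∑ i ∈ Ico k N, X i ω)⟩ => ?_
        have h_split := Finset.sum_range_add_sum_Ico (fun i => X i ω) (Finset.mem_range_succ_iff.1 hk)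
        exact (lt_add_of_lt_of_nonneg hbk hC).trans_eq h_split

end Levy

end ProbabilityTheory

lemma exists_dyadic_lt_of_continuousAt {f : ℝ → ℝ} {T b t : ℝ} (hT : 0 < T) (ht : t ∈ Icc 0 T)
    (hf : ContinuousAt f t) (hb : b < f t) : ∃ m k : ℕ, k ≤ 2 ^ m ∧ b < f (k * T / 2 ^ m) := by
  obtain ⟨δ, hδ, h_ball⟩ := Metric.eventually_nhds_iff.1 (hf.eventually (lt_mem_nhds hb))
  obtain ⟨m, hm⟩ := pow_unbounded_of_one_lt (T / δ) one_lt_two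
  have h2m : (0 : ℝ) < 2 ^ m := by positivity
  set k := ⌊t * 2 ^ m / T⌋₊
  have hk_le : (k : ℝ) ≤ t * 2 ^ m / T := Nat.floor_le (by have := ht.1; positivity)
  have hk_gt : t * 2 ^ m / T < k + 1 := Nat.lt_floor_add_one _
  rw [le_div_iff₀ hT] at hk_le
  rw [div_lt_iff₀ hT] at hk_gt
  rw [div_lt_iff₀ hδ] at hm
  refine ⟨m, k, ?_, h_ball ?_⟩
  · have : (k : ℝ) * T ≤ 2 ^ m * T := by nlinarith [ht.2]
    exact_mod_cast le_of_mul_le_mul_right this hT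
  · rw [Real.dist_eq, abs_lt, lt_sub_iff_add_lt, sub_lt_iff_lt_add, div_lt_iff₀ h2m, lt_div_iff₀ h2m]
    constructor <;> nlinarith

lemma cube_add_div_le_sq_div {r : ℝ} (hr : 1 ≤ r) (n : ℕ) :
    (r ^ 3 + n) / 4096 ≤ ((r ^ 2 + n ^ 2) / 16) ^ 2 / (4 * (n + 1)) := by
  have hn : (n : ℝ) ≤ n ^ 2 := by
    rcases n with _ | n
    · simp
    · push_cast; nlinarith
  rw [div_le_div_iff₀ (by norm_num) (by positivity)]
  nlinarith [sq_nonneg ((n : ℝ) * r - r ^ 2), mul_nonneg (sub_nonneg.2 hr) (sq_nonneg (n : ℝ)),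
    pow_le_pow_left₀ zero_le_one hr 3, mul_nonneg (sub_nonneg.2 hr) (pow_nonneg (by linarith : (0:ℝ) ≤ r) 3)]

lemma hasSum_exp_neg_add_nat_div {K : ℝ} (hK : 0 < K) (a : ℝ) :
    HasSum (fun n : ℕ => exp (-(a + n) / K)) (exp (-a / K) * (1 - exp (-1 / K))⁻¹) := by
  have hρ : exp (-1 / K) < 1 := exp_lt_one_iff.2 (div_neg_of_neg_of_pos (by norm_num) hK)
  have h_eq : (fun n : ℕ => exp (-(a + n) / K)) = fun n => exp (-a / K) * exp (-1 / K) ^ n := by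
    funext n
    rw [← exp_nat_mul, ← exp_add]
    ring_nf
  rw [h_eq]
  exact (hasSum_geometric_of_lt_one (exp_pos _).le hρ).mul_left _

lemma tsum_exp_neg_add_nat_div_le {K : ℝ} (hK : 0 < K) (a : ℝ) :
    ∑' n : ℕ, exp (-(a + n) / K) ≤ (K + 1) * exp (-a / K) := by
  rw [(hasSum_exp_neg_add_nat_div hK a).tsum_eq, mul_comm]
  gcongr
  have h_pos : 0 < 1 - exp (-1 / K) := sub_pos.2 (exp_lt_one_iff.2 (by simpa [neg_div] using hK))
  have h := add_one_le_exp (1 / K)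
  rw [inv_le_iff_one_le_mul₀ h_pos, neg_div, exp_neg]
  field_simp
  nlinarith [mul_le_mul_of_nonneg_left h hK.le, mul_one_div_cancel hK.ne']

lemma exists_Icc_lt_of_parabola_le {f : ℝ → ℝ} {r z : ℝ} (hr : r ≠ 0)
    (hz : r ^ 2 / 8 + z ^ 2 / 8 ≤ f z) :
    ∃ n : ℕ, ∃ t ∈ Icc (0 : ℝ) (n + 1), (r ^ 2 + n ^ 2) / 16 < f t ∨ (r ^ 2 + n ^ 2) / 16 < f (-t) := by
  set n := ⌊|z|⌋₊
  have hn : (n : ℝ) ≤ |z| := Nat.floor_le (abs_nonneg z)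
  have h_lt : (r ^ 2 + n ^ 2) / 16 < f z := by
    have : (n : ℝ) ^ 2 ≤ z ^ 2 := by rw [← sq_abs z]; gcongr
    have : 0 < r ^ 2 := by positivity
    nlinarith
  refine ⟨n, |z|, ⟨abs_nonneg z, (Nat.lt_floor_add_one _).le⟩, ?_⟩
  rcases abs_choice z with h | h <;> rw [h]
  · exact .inl h_lt
  · exact .inr (by rwa [neg_neg])

open ProbabilityTheory

namespace IsTwoSidedBM

variable {Ω : Type*} [MeasureSpace Ω] {B : ℝ → Ω → ℝ}

lemma measurable_sub (hB : IsTwoSidedBM B) (s t : ℝ) : Measurable fun ω => B t ω - B s ω :=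
  (hB.meas t).sub (hB.meas s)

lemma hasIndepIncrements (hB : IsTwoSidedBM B) : HasIndepIncrements B ℙ := hB.indep

lemma inv_two_le_measure_sub_nonneg (hB : IsTwoSidedBM B) {s t : ℝ} (hst : s ≤ t) :
    (2 : ℝ≥0∞)⁻¹ ≤ ℙ {ω | 0 ≤ B t ω - B s ω} := by
  have h := inv_two_le_gaussianReal_Ici_zero (2 * (t - s)).toNNReal
  rwa [← hB.gauss s t hst, Measure.map_apply (hB.measurable_sub s t) measurableSet_Ici] at h

lemma comp_neg (hB : IsTwoSidedBM B) : IsTwoSidedBM (fun t ω => B (-t) ω) where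
  meas t := hB.meas (-t)
  init := by simpa only [neg_zero] using hB.init
  cont := hB.cont.mono fun _ h => h.comp continuous_neg
  gauss s t hst := by
    have h_eq : (fun ω => B (-t) ω - B (-s) ω) = (fun x => -x) ∘ (fun ω => B (-s) ω - B (-t) ω) := by
      funext ω; simp only [Function.comp_apply, neg_sub]
    rw [h_eq, ← Measure.map_map measurable_neg (hB.measurable_sub _ _),
      hB.gauss (-t) (-s) (neg_le_neg hst), gaussianReal_map_neg, neg_zero, neg_sub_neg]
  indep n t ht := by
    have h := ((hB.indep n (fun j => -t j.rev) fun i j hij => neg_le_neg (ht (Fin.rev_le_rev.2 hij))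
      ).precomp Fin.rev_injective).comp (fun _ x => -x) fun _ => measurable_neg
    convert h using 2 with i
    funext ω
    simp [Fin.rev_succ, Fin.rev_castSucc]

lemma measure_parabola_le_tsum (hB : IsTwoSidedBM B) {r : ℝ} (hr : r ≠ 0) :
    ℙ {ω | ∃ z : ℝ, r ^ 2 / 8 + z ^ 2 / 8 ≤ B z ω}
      ≤ ∑' n : ℕ, (ℙ {ω | ∃ t ∈ Icc (0 : ℝ) (n + 1), (r ^ 2 + n ^ 2) / 16 < B t ω - B 0 ω}
        + ℙ {ω | ∃ t ∈ Icc (0 : ℝ) (n + 1), (r ^ 2 + n ^ 2) / 16 < B (-t) ω - B 0 ω}) := by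
  refine (measure_mono_ae ?_).trans ((measure_iUnion_le _).trans
    (ENNReal.tsum_le_tsum fun n => measure_union_le _ _))
  filter_upwards [hB.init] with ω hω ⟨z, hz⟩
  obtain ⟨n, t, ht, h | h⟩ := exists_Icc_lt_of_parabola_le (f := fun t => B t ω - B 0 ω) hr
    (by simpa [hω] using hz)
  · exact Set.mem_iUnion.2 ⟨n, .inl ⟨t, ht, h⟩⟩
  · exact Set.mem_iUnion.2 ⟨n, .inr ⟨t, ht, h⟩⟩

variable [IsProbabilityMeasure (ℙ : Measure Ω)]

lemma measure_le_sub_le (hB : IsTwoSidedBM B) {s t b : ℝ} (hst : s ≤ t) (hb : 0 ≤ b) :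
    ℙ {ω | b ≤ B t ω - B s ω} ≤ ENNReal.ofReal (exp (-b ^ 2 / (4 * (t - s)))) := by
  have h_subG : HasSubgaussianMGF (fun ω => B t ω - B s ω) (2 * (t - s)).toNNReal :=
    (HasSubgaussianMGF.id_map_iff (hB.measurable_sub s t).aemeasurable).1
      (by rw [hB.gauss s t hst]; exact hasSubgaussianMGF_id_gaussianReal _)
  rw [← ofReal_measureReal]
  refine ENNReal.ofReal_le_ofReal ((h_subG.measure_ge_le hb).trans_eq ?_)
  rw [Real.coe_toNNReal _ (by linarith)]
  ring_nf

lemma measure_exists_dyadic_lt_le (hB : IsTwoSidedBM B) {T b : ℝ} (hT : 0 ≤ T) (hb : 0 ≤ b)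
    (m : ℕ) :
    ℙ {ω | ∃ k : ℕ, k ≤ 2 ^ m ∧ b < B (k * T / 2 ^ m) ω - B 0 ω}
      ≤ 2 * ENNReal.ofReal (exp (-b ^ 2 / (4 * T))) := by
  set u : ℕ → ℝ := fun i => min (i * T / 2 ^ m) T
  have hu_mono : Monotone u := fun i j hij => min_le_min_right _ (by gcongr)
  have hu_eq : ∀ k ≤ 2 ^ m, u k = k * T / 2 ^ m := fun k hk => min_eq_left <| by
    rw [div_le_iff₀ (by positivity), mul_comm]
    gcongr
    exact_mod_cast hk
  have hu_zero : u 0 = 0 := by simp [u, hT]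
  have hu_last : u (2 ^ m) = T := by simp [u]
  set X : ℕ → Ω → ℝ := fun i ω => B (u (i + 1)) ω - B (u i) ω
  have h_sum : ∀ k ω, ∑ i ∈ range k, X i ω = B (u k) ω - B 0 ω := fun k ω => by
    rw [Finset.sum_range_sub (fun i => B (u i) ω), hu_zero]
  have h_sum_Ico : ∀ k ≤ 2 ^ m, ∀ ω, ∑ i ∈ Ico k (2 ^ m), X i ω = B T ω - B (u k) ω :=
    fun k hk ω => by rw [Finset.sum_Ico_eq_sub _ hk, h_sum, h_sum, hu_last, sub_sub_sub_cancel_right]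
  have h_levy := levy_maximal_ineq (X := X) (fun i => hB.measurable_sub _ _)
    (hB.hasIndepIncrements.nat hu_mono) (2 ^ m)
    (fun k hk => by simpa only [h_sum_Ico k hk] using
      hB.inv_two_le_measure_sub_nonneg (hu_last ▸ hu_mono hk)) b
  calc ℙ {ω | ∃ k : ℕ, k ≤ 2 ^ m ∧ b < B (k * T / 2 ^ m) ω - B 0 ω}
      ≤ ℙ {ω | ∃ k ≤ 2 ^ m, b < ∑ i ∈ range k, X i ω} :=
        measure_mono fun ω ⟨k, hk, h⟩ => ⟨k, hk, by rwa [h_sum, hu_eq k hk]⟩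
    _ ≤ 2 * ℙ {ω | b < ∑ i ∈ range (2 ^ m), X i ω} := h_levy
    _ ≤ 2 * ENNReal.ofReal (exp (-b ^ 2 / (4 * T))) := by
        gcongr
        calc ℙ {ω | b < ∑ i ∈ range (2 ^ m), X i ω} ≤ ℙ {ω | b ≤ B T ω - B 0 ω} :=
              measure_mono fun ω (h : b < _) => by rw [h_sum, hu_last] at h; exact h.le
          _ ≤ _ := by simpa only [sub_zero] using hB.measure_le_sub_le hT hb

lemma measure_exists_Icc_lt_le (hB : IsTwoSidedBM B) {T b : ℝ} (hT : 0 < T) (hb : 0 ≤ b) :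
    ℙ {ω | ∃ t ∈ Icc 0 T, b < B t ω - B 0 ω} ≤ 2 * ENNReal.ofReal (exp (-b ^ 2 / (4 * T))) := by
  set E : ℕ → Set Ω := fun m => {ω | ∃ k : ℕ, k ≤ 2 ^ m ∧ b < B (k * T / 2 ^ m) ω - B 0 ω}
  have hE_mono : Monotone E := monotone_nat_of_le_succ fun m ω ⟨k, hk, h⟩ => by
    have h_eq : ((2 * k : ℕ) : ℝ) * T / 2 ^ (m + 1) = k * T / 2 ^ m := by
      push_cast; rw [pow_succ]; field_simp
    exact ⟨2 * k, by rw [pow_succ]; omega, by rwa [h_eq]⟩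
  have h_sub : {ω | ∃ t ∈ Icc 0 T, b < B t ω - B 0 ω} ≤ᵐ[ℙ] ⋃ m, E m := by
    filter_upwards [hB.cont] with ω hω ⟨t, ht, h⟩
    obtain ⟨m, k, hk, h⟩ := exists_dyadic_lt_of_continuousAt (f := fun t => B t ω - B 0 ω) hT ht
      (by fun_prop) h
    exact Set.mem_iUnion.2 ⟨m, k, hk, h⟩
  calc ℙ {ω | ∃ t ∈ Icc 0 T, b < B t ω - B 0 ω} ≤ ℙ (⋃ m, E m) := measure_mono_ae h_sub
    _ = ⨆ m, ℙ (E m) := hE_mono.measure_iUnion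
    _ ≤ _ := iSup_le fun m => hB.measure_exists_dyadic_lt_le hT.le hb m

lemma measure_exists_Icc_lt_parabola_le (hB : IsTwoSidedBM B) {r : ℝ} (hr : 1 ≤ r) (n : ℕ) :
    ℙ {ω | ∃ t ∈ Icc (0 : ℝ) (n + 1), (r ^ 2 + n ^ 2) / 16 < B t ω - B 0 ω}
      ≤ ENNReal.ofReal (2 * exp (-(r ^ 3 + n) / 4096)) := by
  refine (hB.measure_exists_Icc_lt_le (by positivity) (by positivity)).trans ?_
  rw [← ENNReal.ofReal_ofNat 2, ← ENNReal.ofReal_mul zero_le_two]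
  refine ENNReal.ofReal_le_ofReal (mul_le_mul_of_nonneg_left (exp_le_exp.2 ?_) zero_le_two)
  rw [neg_div, neg_div, neg_le_neg_iff]
  exact cube_add_div_le_sq_div hr n

end IsTwoSidedBM

theorem stmt_11 :
    ∃ C : ℝ, 0 < C ∧
      ∀ (Ω : Type) [MeasureSpace Ω] [IsProbabilityMeasure (ℙ : Measure Ω)]
        (B : ℝ → Ω → ℝ), IsTwoSidedBM B →
        ∀ r : ℝ, 0 < r →
          ℙ {ω | ∃ z : ℝ, r^2/8 + z^2/8 ≤ B z ω}
            ≤ ENNReal.ofReal (C * Real.exp (-(r^3)/C)) := by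
  refine ⟨2 ^ 15, by norm_num, fun Ω _ _ B hB r hr => ?_⟩
  rcases le_or_gt r 1 with hr1 | hr1
  · refine prob_le_one.trans (ENNReal.one_le_ofReal.2 ?_)
    have := add_one_le_exp (-r ^ 3 / 2 ^ 15)
    have : r ^ 3 ≤ 1 := pow_le_one₀ hr.le hr1
    nlinarith
  have h_summable := (hasSum_exp_neg_add_nat_div (K := 4096) (by norm_num) (r ^ 3)).summable
  calc ℙ {ω | ∃ z : ℝ, r ^ 2 / 8 + z ^ 2 / 8 ≤ B z ω}
      ≤ ∑' n : ℕ, ENNReal.ofReal (4 * exp (-(r ^ 3 + n) / 4096)) := by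
        refine (hB.measure_parabola_le_tsum hr.ne').trans (ENNReal.tsum_le_tsum fun n => ?_)
        rw [show (4 : ℝ) = 2 + 2 by norm_num, add_mul, ENNReal.ofReal_add (by positivity) (by positivity)]
        gcongr
        · exact hB.measure_exists_Icc_lt_parabola_le hr1.le n
        · simpa only [neg_zero] using hB.comp_neg.measure_exists_Icc_lt_parabola_le hr1.le n
    _ = ENNReal.ofReal (4 * ∑' n : ℕ, exp (-(r ^ 3 + n) / 4096)) := by
        rw [← tsum_mul_left, ENNReal.ofReal_tsum_of_nonneg (fun n => by positivity)
          (h_summable.mul_left 4)]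
    _ ≤ ENNReal.ofReal (2 ^ 15 * exp (-r ^ 3 / 2 ^ 15)) := by
        refine ENNReal.ofReal_le_ofReal ?_
        have h_exp : exp (-r ^ 3 / 4096) ≤ exp (-r ^ 3 / 2 ^ 15) := exp_le_exp.2 <| by
          rw [div_le_div_iff₀ (by norm_num) (by norm_num)]
          nlinarith [pow_pos hr 3]
        have h_tsum := tsum_exp_neg_add_nat_div_le (K := 4096) (by norm_num) (r ^ 3)
        linarith [exp_pos (-r ^ 3 / 2 ^ 15)]
end

section
/- There exists a constant C' > 0 such that for every c > 0 and every s > 0, ∫_ℝ exp(−c·(s + x²)²/|x|) dx ≤ (C'/min(c,1))·exp(−c·s^{3/2}) · (1 + s^{-1/2} + 1/c). -/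
open MeasureTheory Real

theorem stmt_16 :
    ∃ C' : ℝ, 0 < C' ∧ ∀ c s : ℝ, 0 < c → 0 < s →
      (∫ x : ℝ, Real.exp (-c * (s + x^2)^2 / |x|)) ≤
        (C' / min c 1) * Real.exp (-c * s^((3:ℝ)/2)) * (1 + s^(-(1:ℝ)/2) + 1/c) := by
  refine ⟨6, by norm_num, fun c s hc hs => ?_⟩
  set m := min c 1 with hm
  have hm0 : 0 < m := lt_min hc one_pos
  have hm1 : m ≤ 1 := min_le_right _ _
  have hmc : m ≤ c := min_le_left _ _
  set u := Real.sqrt s with hu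
  have hu0 : 0 < u := Real.sqrt_pos.mpr hs
  have hu2 : u ^ 2 = s := Real.sq_sqrt hs.le
  have hs32 : s ^ ((3:ℝ)/2) = u ^ 3 := by
    rw [hu, Real.sqrt_eq_rpow, ← Real.rpow_natCast (s ^ ((1:ℝ)/2)) 3,
        ← Real.rpow_mul hs.le]
    norm_num
  have key : (∫ x : ℝ, Real.exp (-c * (s + x^2)^2 / |x|)) ≤
      ∫ x : ℝ, Real.exp (-c * s^((3:ℝ)/2) + 1/2) * Real.exp (-(m/2) * x^2) := by
    refine integral_mono_of_nonneg ?_ ?_ ?_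
    · exact Filter.Eventually.of_forall fun x => (Real.exp_pos _).le
    · exact (integrable_exp_neg_mul_sq (by positivity)).const_mul _
    · have h0 : ∀ᵐ x : ℝ, x ≠ (0:ℝ) := by
        refine ae_iff.mpr ?_
        simp
      filter_upwards [h0] with x hx
      rw [← Real.exp_add, Real.exp_le_exp]
      have ht0 : 0 < |x| := abs_pos.mpr hx
      set t := |x| with ht
      have hx2 : x ^ 2 = t ^ 2 := (sq_abs x).symm
      rw [hs32, hx2, show s = u^2 from hu2.symm, div_le_iff₀ ht0]
      have hg : u^3 * t + t^4/2 ≤ (u^2 + t^2)^2 := by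
        nlinarith [sq_nonneg (u*(u-t)), sq_nonneg (u*t), sq_nonneg (t^2)]
      have h1 : 0 ≤ t^4 - t^3 + t := by
        nlinarith [mul_nonneg (mul_pos ht0 ht0).le (sq_nonneg (t-1)),
          mul_nonneg ht0.le (sq_nonneg (2*t-1))]
      nlinarith [mul_le_mul_of_nonneg_left hg hc.le,
        mul_nonneg (sub_nonneg.mpr hmc) (pow_nonneg ht0.le 4),
        mul_nonneg hm0.le h1,
        mul_nonneg (sub_nonneg.mpr hm1) ht0.le]
  rw [integral_const_mul, integral_gaussian (m/2)] at key
  have hsqrt : Real.sqrt (π / (m/2)) ≤ 3 / m := by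
    have h9 : π / (m/2) ≤ (3/m)^2 := by
      rw [div_pow, div_le_div_iff₀ (by positivity) (by positivity)]
      nlinarith [Real.pi_le_four, mul_le_mul_of_nonneg_left hm1 hm0.le, Real.pi_pos]
    calc Real.sqrt (π / (m/2)) ≤ Real.sqrt ((3/m)^2) := Real.sqrt_le_sqrt h9
      _ = 3/m := Real.sqrt_sq (by positivity)
  have hexp : Real.exp ((1:ℝ)/2) ≤ 2 := by
    have h1 : Real.exp ((1:ℝ)/2) * Real.exp ((1:ℝ)/2) = Real.exp 1 := by
      rw [← Real.exp_add]; norm_num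
    nlinarith [Real.exp_pos ((1:ℝ)/2), Real.exp_one_lt_d9]
  have hfac : 1 ≤ 1 + s^(-(1:ℝ)/2) + 1/c := by
    have h1 : 0 ≤ s^(-(1:ℝ)/2) := Real.rpow_nonneg hs.le _
    have h2 : 0 ≤ 1/c := by positivity
    linarith
  calc (∫ x : ℝ, Real.exp (-c * (s + x^2)^2 / |x|))
      ≤ Real.exp (-c * s^((3:ℝ)/2) + 1/2) * Real.sqrt (π / (m/2)) := key
    _ = Real.exp (-c * s^((3:ℝ)/2)) * Real.exp ((1:ℝ)/2) * Real.sqrt (π / (m/2)) := by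
        rw [Real.exp_add]
    _ ≤ Real.exp (-c * s^((3:ℝ)/2)) * 2 * (3/m) := by
        have he := (Real.exp_pos (-c * s^((3:ℝ)/2))).le
        have hsq : 0 ≤ Real.sqrt (π / (m/2)) := Real.sqrt_nonneg _
        gcongr
    _ = (6 / m) * Real.exp (-c * s^((3:ℝ)/2)) * 1 := by ring
    _ ≤ (6 / m) * Real.exp (-c * s^((3:ℝ)/2)) * (1 + s^(-(1:ℝ)/2) + 1/c) := by
        gcongr
end
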